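/- arXiv:1401.1874 — 12 statements merged into one kernel-verified Lean document; each statement's English description precedes it below -/
import Mathlib

section
/- Let n ≥ 1, let Z₀ be the n×n lower shift matrix over ℂ, and let t_{-(n-1)}, …, t_{n-1} ∈ ℂ. Let T be the n×n Toeplitz matrix with entries T_{ij} = t_{i-j}. Then T − Z₀·T·Z₀ᵀ = G·B, where G is the n×2 matrix whose first column is (t₀/2, t₁, t₂, …, t_{n-1})ᵀ and whose second column is (1, 0, …, 0)ᵀ, and B is the 2×n matrix whose first row is (1, 0, …, 0) and whose second row is (t₀/2, t_{-1}, t_{-2}, …, t_{-n+1}). In particular, the displacement T − Z₀·T·Z₀ᵀ has rank at most 2. -/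
/-!
Conjugation by the lower shift moves every entry one step down the diagonal and fills the first
row and column with zeros. A Toeplitz matrix is constant along diagonals, so its displacement
`T - Z T Zᵀ` vanishes outside the first row and column; there it equals `T`, which is exactly
the sum of the two rank-one terms `G i 0 * B 0 j` (first column) and `G i 1 * B 1 j` (first row),
the corner `t 0` being split evenly between them.
-/

open Matrix

namespace Matrix

def lowerShift (R : Type*) [Zero R] [One R] (n : ℕ) : Matrix (Fin n) (Fin n) R :=
  of fun i j => if (i : ℕ) = (j : ℕ) + 1 then 1 else 0

section Shift

variable {R ι : Type*} [Semiring R] {m : ℕ}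

theorem lowerShift_mul_apply_zero (A : Matrix (Fin (m + 1)) ι R) (j : ι) :
    (lowerShift R (m + 1) * A) 0 j = 0 := by
  simp [lowerShift, mul_apply]

theorem lowerShift_mul_apply_succ (A : Matrix (Fin (m + 1)) ι R) (i : Fin m) (j : ι) :
    (lowerShift R (m + 1) * A) i.succ j = A i.castSucc j := by
  have hk : ∀ k : Fin (m + 1), (i : ℕ) = k ↔ k = i.castSucc := by
    simp [Fin.ext_iff, eq_comm]
  simp [lowerShift, mul_apply, hk]

theorem mul_lowerShift_transpose_apply_zero (A : Matrix ι (Fin (m + 1)) R) (i : ι) :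
    (A * (lowerShift R (m + 1))ᵀ) i 0 = 0 := by
  simp [lowerShift, mul_apply]

theorem mul_lowerShift_transpose_apply_succ (A : Matrix ι (Fin (m + 1)) R) (i : ι) (j : Fin m) :
    (A * (lowerShift R (m + 1))ᵀ) i j.succ = A i j.castSucc := by
  have hk : ∀ k : Fin (m + 1), (j : ℕ) = k ↔ k = j.castSucc := by
    simp [Fin.ext_iff, eq_comm]
  simp [lowerShift, mul_apply, hk]

variable (A : Matrix (Fin (m + 1)) (Fin (m + 1)) R)

theorem lowerShift_conj_apply_zero_left (j : Fin (m + 1)) :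
    (lowerShift R (m + 1) * A * (lowerShift R (m + 1))ᵀ) 0 j = 0 := by
  rw [Matrix.mul_assoc, lowerShift_mul_apply_zero]

theorem lowerShift_conj_apply_zero_right (i : Fin (m + 1)) :
    (lowerShift R (m + 1) * A * (lowerShift R (m + 1))ᵀ) i 0 = 0 :=
  mul_lowerShift_transpose_apply_zero _ i

theorem lowerShift_conj_apply_succ_succ (i j : Fin m) :
    (lowerShift R (m + 1) * A * (lowerShift R (m + 1))ᵀ) i.succ j.succ =
      A i.castSucc j.castSucc := by
  rw [mul_lowerShift_transpose_apply_succ, lowerShift_mul_apply_succ]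

end Shift

theorem toeplitz_apply_succ_succ {α : Type*} {m : ℕ} (t : ℤ → α)
    (T : Matrix (Fin (m + 1)) (Fin (m + 1)) α) (hT : ∀ i j, T i j = t ((i : ℤ) - (j : ℤ)))
    (i j : Fin m) : T i.succ j.succ = T i.castSucc j.castSucc := by
  rw [hT, hT]
  congr 1
  simp only [Fin.val_succ, Fin.val_castSucc]
  push_cast
  ring

end Matrix

theorem toeplitz_displacement_general (n : ℕ) (t : ℤ → ℂ)
    (Z : Matrix (Fin n) (Fin n) ℂ)
    (hZ : ∀ i j : Fin n, Z i j = if (i : ℕ) = (j : ℕ) + 1 then 1 else 0)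
    (T : Matrix (Fin n) (Fin n) ℂ)
    (hT : ∀ i j : Fin n, T i j = t ((i : ℤ) - (j : ℤ)))
    (G : Matrix (Fin n) (Fin 2) ℂ)
    (hG0 : ∀ i : Fin n, G i 0 = if (i : ℕ) = 0 then t 0 / 2 else t (i : ℕ))
    (hG1 : ∀ i : Fin n, G i 1 = if (i : ℕ) = 0 then 1 else 0)
    (B : Matrix (Fin 2) (Fin n) ℂ)
    (hB0 : ∀ j : Fin n, B 0 j = if (j : ℕ) = 0 then 1 else 0)
    (hB1 : ∀ j : Fin n, B 1 j = if (j : ℕ) = 0 then t 0 / 2 else t (-((j : ℕ) : ℤ))) :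
    T - Z * T * Zᵀ = G * B ∧ (T - Z * T * Zᵀ).rank ≤ 2 := by
  have hGB : T - Z * T * Zᵀ = G * B := by
    obtain rfl : Z = lowerShift ℂ n := ext hZ
    cases n with
    | zero => exact ext fun i => i.elim0
    | succ m =>
      ext i j
      have hGB_apply : (G * B) i j = G i 0 * B 0 j + G i 1 * B 1 j := by
        simp [mul_apply, Fin.sum_univ_two]
      rw [Matrix.sub_apply, hGB_apply, hG0, hG1, hB0, hB1]
      cases i using Fin.cases <;> cases j using Fin.cases
      · simp [lowerShift_conj_apply_zero_left, hT]
      · simp [lowerShift_conj_apply_zero_left, hT]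
      · simp [lowerShift_conj_apply_zero_right, hT]
      · simp [lowerShift_conj_apply_succ_succ, toeplitz_apply_succ_succ t T hT]
  refine ⟨hGB, hGB ▸ ?_⟩
  calc (G * B).rank ≤ G.rank := rank_mul_le_left G B
    _ ≤ Fintype.card (Fin 2) := rank_le_card_width G
    _ = 2 := Fintype.card_fin 2

/-- displacement structure of a Toeplitz matrix.
`Z` is the `n × n` lower shift matrix, `T` the Toeplitz matrix with entries
`T i j = t (i - j)`.  Then `T - Z * T * Zᵀ = G * B` with the explicit rank-two
generators `G`, `B`, and in particular the displacement has rank at most `2`. -/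
theorem toeplitz_displacement (n : ℕ) (hn : 1 ≤ n) (t : ℤ → ℂ)
    (Z : Matrix (Fin n) (Fin n) ℂ)
    (hZ : ∀ i j : Fin n, Z i j = if (i : ℕ) = (j : ℕ) + 1 then 1 else 0)
    (T : Matrix (Fin n) (Fin n) ℂ)
    (hT : ∀ i j : Fin n, T i j = t ((i : ℤ) - (j : ℤ)))
    (G : Matrix (Fin n) (Fin 2) ℂ)
    (hG0 : ∀ i : Fin n, G i 0 = if (i : ℕ) = 0 then t 0 / 2 else t (i : ℕ))
    (hG1 : ∀ i : Fin n, G i 1 = if (i : ℕ) = 0 then 1 else 0)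
    (B : Matrix (Fin 2) (Fin n) ℂ)
    (hB0 : ∀ j : Fin n, B 0 j = if (j : ℕ) = 0 then 1 else 0)
    (hB1 : ∀ j : Fin n, B 1 j = if (j : ℕ) = 0 then t 0 / 2 else t (-((j : ℕ) : ℤ))) :
    T - Z * T * Zᵀ = G * B ∧ (T - Z * T * Zᵀ).rank ≤ 2 :=
  toeplitz_displacement_general n t Z hZ T hT G hG0 hG1 B hB0 hB1
end

section
/- Let Q = {Q₀, …, Q_{n-1}} be a system of polynomials over ℂ satisfying general recurrence relations with coefficients τ_k and a_{j,k}, let M_Q and N_Q be the associated recurrence-relation matrices, let x₁, …, xₙ ∈ ℂ, let V_Q(x) be the polynomial Vandermonde matrix, and let D_x = diag(x₁, …, xₙ). Then V_Q(x)·M_Q − D_x·V_Q(x)·N_Q = 𝟙·e₁ᵀ·τ₀, i.e., it equals the rank-one n×n matrix whose first column has every entry equal to τ₀ and all other columns are zero. -/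
open Matrix Polynomial Finset

/-!
Fix a row `i` and write `g k = (Q k).eval (x i)`. Entry `j` of that row is `g j + ∑_{k<j} a k j * g k`
in `V * M` and `x i * τ j * g (j - 1)` in `diagonal x * V * N` (zero for `j = 0`). For `j ≥ 1` the
recurrence evaluated at `x i` says exactly that these agree, and for `j = 0` what remains is `g 0 = τ 0`.
-/

section Sums

variable {R : Type*} [CommSemiring R]

theorem sum_fin_mul_unitriangular {n j : ℕ} (hj : j < n) (g a : ℕ → R) :
    ∑ k : Fin n, g k * (if (k : ℕ) = j then 1 else if (k : ℕ) < j then a k else 0) =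
      g j + ∑ k ∈ range j, a k * g k := by
  rw [Fin.sum_univ_eq_sum_range (fun k => g k * (if k = j then 1 else if k < j then a k else 0)),
    ← sum_range_add_sum_Ico _ hj.le, add_comm, sum_eq_single_of_mem j (left_mem_Ico.2 hj)]
  · simp only [if_true, mul_one]
    congr 1
    refine sum_congr rfl fun k hk => ?_
    rw [mem_range] at hk
    rw [if_neg hk.ne, if_pos hk, mul_comm]
  · intro k hk hkj
    rw [mem_Ico] at hk
    rw [if_neg hkj, if_neg (by omega), mul_zero]

theorem sum_fin_mul_superdiagonal {n j : ℕ} (hj : j < n) (g t : ℕ → R) :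
    ∑ k : Fin n, g k * (if j = k + 1 then t (k + 1) else 0) =
      if j = 0 then 0 else g (j - 1) * t j := by
  rw [Fin.sum_univ_eq_sum_range (fun k => g k * (if j = k + 1 then t (k + 1) else 0))]
  rcases j with _ | m
  · simp
  · simp [show m < n by omega]

end Sums

theorem eval_add_sum_eq_of_recurrence {R : Type*} [CommRing R] {Q : ℕ → R[X]} {τ : ℕ → R}
    {a : ℕ → ℕ → R} {k : ℕ}
    (hk : Q k = C (τ k) * X * Q (k - 1) - ∑ j ∈ range k, C (a j k) * Q j) (t : R) :
    (Q k).eval t + ∑ j ∈ range k, a j k * (Q j).eval t = τ k * t * (Q (k - 1)).eval t := by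
  rw [hk]
  simp only [eval_sub, eval_mul, eval_C, eval_X, eval_finsetSum]
  ring

/-- displacement equation for a polynomial Vandermonde matrix.
The polynomial system `Q` satisfies the general recurrence relations with
coefficients `τ`, `a`; `M` and `N` are the recurrence-relation matrices
(0-indexed: `M i j = a i j` for `i < j`, `1` on the diagonal, and
`N i (i+1) = τ (i+1)`), `V` is the polynomial Vandermonde matrix, and
`D_x = diagonal x`.  Then `V * M - D_x * V * N` is the rank-one matrix
whose first column has each entry equal to `τ 0` and whose other columns
vanish. -/
theorem polyVandermonde_displacement (n : ℕ) (τ : ℕ → ℂ) (a : ℕ → ℕ → ℂ)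
    (Q : ℕ → Polynomial ℂ)
    (hQ0 : Q 0 = C (τ 0))
    (hQrec : ∀ k, 1 ≤ k → k ≤ n - 1 →
      Q k = C (τ k) * X * Q (k - 1) - ∑ j ∈ Finset.range k, C (a j k) * Q j)
    (x : Fin n → ℂ)
    (M N V : Matrix (Fin n) (Fin n) ℂ)
    (hM : ∀ i j : Fin n,
      M i j = if (i : ℕ) = (j : ℕ) then 1
              else if (i : ℕ) < (j : ℕ) then a (i : ℕ) (j : ℕ) else 0)
    (hN : ∀ i j : Fin n,
      N i j = if (j : ℕ) = (i : ℕ) + 1 then τ ((i : ℕ) + 1) else 0)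
    (hV : ∀ i j : Fin n, V i j = (Q (j : ℕ)).eval (x i)) :
    V * M - Matrix.diagonal x * V * N =
      Matrix.of (fun _ j : Fin n => if (j : ℕ) = 0 then τ 0 else 0) := by
  ext i j
  have hVM : (V * M) i j = (Q j).eval (x i) + ∑ k ∈ range j, a k j * (Q k).eval (x i) := by
    simp only [mul_apply, hV, hM]
    exact sum_fin_mul_unitriangular j.isLt (fun k => (Q k).eval (x i)) (a · j)
  have hDVN : (diagonal x * V * N) i j =
      x i * if (j : ℕ) = 0 then 0 else (Q (j - 1)).eval (x i) * τ j := by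
    rw [mul_apply]
    simp only [diagonal_mul, hV, hN, mul_assoc, ← mul_sum]
    rw [sum_fin_mul_superdiagonal j.isLt (fun k => (Q k).eval (x i)) τ]
  rw [Matrix.sub_apply, hVM, hDVN, of_apply]
  by_cases hj : (j : ℕ) = 0
  · simp [hj, hQ0]
  · rw [if_neg hj, if_neg hj,
      eval_add_sum_eq_of_recurrence (hQrec j (Nat.one_le_iff_ne_zero.2 hj) (by omega))]
    ring
end

section
/- Let R be an n×n complex matrix with block partition R = [[d, u], [l, R₂₂]], where d ∈ ℂ is nonzero, u is 1×(n−1), l is (n−1)×1, and R₂₂ is (n−1)×(n−1). Suppose Ω·R − R·A = G·B, where Ω ∈ ℂ^{n×n} is lower triangular, A ∈ ℂ^{n×n} is upper triangular, G ∈ ℂ^{n×α}, B ∈ ℂ^{α×n}. Let g₁ be the first row of G and b₁ the first column of B, and define G' ∈ ℂ^{(n-1)×α} and B' ∈ ℂ^{α×(n-1)} by [0; G'] = G − [1; l/d]·g₁ and [0, B'] = B − b₁·[1, u/d]. Then the Schur complement R' = R₂₂ − (1/d)·l·u satisfies Ω'·R' − R'·A' = G'·B', where Ω' and A' are obtained from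 Ω and A by deleting the first row and first column. -/
/-!
With `c = l / d` and `r = u / d`, the elimination matrices `L = [[1, 0], [-c, I]]` and
`U = [[1, -r], [0, I]]` satisfy `L R U = diag(d, R')`. Conjugating keeps `Ω` lower and `A`
upper triangular with unchanged trailing blocks `Ω'`, `A'`, so the trailing block of
`L (Ω R - R A) U = (L G) (B U)` is the claimed identity. Only the last `n` rows of `L` and the
last `n` columns of `U` are needed; they commute past `Ω` and `A` because the first row of `R U`
and the first column of `L R` vanish.
-/

open Matrix

namespace Matrix

section Ring

variable {K : Type*} [Ring K] {n : ℕ}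

/-- The last `n` rows of the unit lower-triangular matrix `[[1, 0], [-c, I]]`. -/
def elimRows (c : Fin n → K) : Matrix (Fin n) (Fin (n + 1)) K :=
  of fun i k => Fin.cases (-c i) (fun k' => if i = k' then 1 else 0) k

/-- The last `n` columns of the unit upper-triangular matrix `[[1, -r], [0, I]]`. -/
def elimCols (r : Fin n → K) : Matrix (Fin (n + 1)) (Fin n) K :=
  of fun k j => Fin.cases (-r j) (fun k' => if k' = j then 1 else 0) k

@[simp]
theorem elimRows_mul_apply {β : Type*} (c : Fin n → K) (M : Matrix (Fin (n + 1)) β K)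
    (i : Fin n) (j : β) : (elimRows c * M) i j = M i.succ j - c i * M 0 j := by
  simp [elimRows, mul_apply, Fin.sum_univ_succ, sub_eq_neg_add]

@[simp]
theorem mul_elimCols_apply {β : Type*} (r : Fin n → K) (M : Matrix β (Fin (n + 1)) K)
    (i : β) (j : Fin n) : (M * elimCols r) i j = M i j.succ - M i 0 * r j := by
  simp [elimCols, mul_apply, Fin.sum_univ_succ, sub_eq_neg_add]

theorem elimRows_mul_mul_of_row_zero_eq_zero {β : Type*} (c : Fin n → K)
    {Ω : Matrix (Fin (n + 1)) (Fin (n + 1)) K} (hΩ : ∀ k : Fin n, Ω 0 k.succ = 0)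
    {M : Matrix (Fin (n + 1)) β K} (hM : ∀ j, M 0 j = 0) :
    elimRows c * (Ω * M) = Ω.submatrix Fin.succ Fin.succ * (elimRows c * M) := by
  ext i j
  simp [mul_apply, Fin.sum_univ_succ, hΩ, hM, elimRows]

theorem mul_mul_elimCols_of_col_zero_eq_zero {β : Type*} (r : Fin n → K)
    {A : Matrix (Fin (n + 1)) (Fin (n + 1)) K} (hA : ∀ k : Fin n, A k.succ 0 = 0)
    {M : Matrix β (Fin (n + 1)) K} (hM : ∀ i, M i 0 = 0) :
    M * A * elimCols r = M * elimCols r * A.submatrix Fin.succ Fin.succ := by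
  ext i j
  simp [mul_apply, Fin.sum_univ_succ, hA, hM, elimCols]

end Ring

section Field

variable {K : Type*} [Field K] {n : ℕ}

def schurComplement (R : Matrix (Fin (n + 1)) (Fin (n + 1)) K) : Matrix (Fin n) (Fin n) K :=
  of fun i j => R i.succ j.succ - R i.succ 0 * R 0 j.succ / R 0 0

variable {R : Matrix (Fin (n + 1)) (Fin (n + 1)) K}

theorem elimRows_pivot_mul_apply_zero (hd : R 0 0 ≠ 0) (i : Fin n) :
    (elimRows (fun i => R i.succ 0 / R 0 0) * R) i 0 = 0 := by
  simp [div_mul_cancel₀ _ hd]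

theorem mul_elimCols_pivot_apply_zero (hd : R 0 0 ≠ 0) (j : Fin n) :
    (R * elimCols (fun j => R 0 j.succ / R 0 0)) 0 j = 0 := by
  simp [mul_div_cancel₀ _ hd]

theorem elimRows_mul_mul_elimCols_eq_schurComplement (hd : R 0 0 ≠ 0) :
    elimRows (fun i => R i.succ 0 / R 0 0) * R * elimCols (fun j => R 0 j.succ / R 0 0) =
      schurComplement R := by
  ext i j
  simp only [mul_elimCols_apply, elimRows_mul_apply, schurComplement, of_apply]
  field_simp
  ring

end Field

end Matrix

/-- displacement structure of the Schur complement.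
`R` is an `(n+1) × (n+1)` matrix with `d = R 0 0 ≠ 0`, `Ω` lower triangular,
`A` upper triangular, satisfying `Ω * R - R * A = G * B`.  With `R'` the Schur
complement of `d` in `R`, `Ω'`, `A'` obtained by deleting the first row and
column of `Ω`, `A`, and the updated generators `G'`, `B'`, we have
`Ω' * R' - R' * A' = G' * B'`. -/
theorem schur_complement_displacement (n α : ℕ)
    (R Ω A : Matrix (Fin (n + 1)) (Fin (n + 1)) ℂ)
    (G : Matrix (Fin (n + 1)) (Fin α) ℂ) (B : Matrix (Fin α) (Fin (n + 1)) ℂ)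
    (hd : R 0 0 ≠ 0)
    (hΩ : ∀ i j : Fin (n + 1), i < j → Ω i j = 0)
    (hA : ∀ i j : Fin (n + 1), j < i → A i j = 0)
    (hdisp : Ω * R - R * A = G * B)
    (R' Ω' A' : Matrix (Fin n) (Fin n) ℂ)
    (hR' : ∀ i j : Fin n,
      R' i j = R i.succ j.succ - R i.succ 0 * R 0 j.succ / R 0 0)
    (hΩ' : ∀ i j : Fin n, Ω' i j = Ω i.succ j.succ)
    (hA' : ∀ i j : Fin n, A' i j = A i.succ j.succ)
    (G' : Matrix (Fin n) (Fin α) ℂ) (B' : Matrix (Fin α) (Fin n) ℂ)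
    (hG' : ∀ (i : Fin n) (p : Fin α),
      G' i p = G i.succ p - (R i.succ 0 / R 0 0) * G 0 p)
    (hB' : ∀ (p : Fin α) (j : Fin n),
      B' p j = B p j.succ - B p 0 * (R 0 j.succ / R 0 0)) :
    Ω' * R' - R' * A' = G' * B' := by
  set L := elimRows fun i => R i.succ 0 / R 0 0
  set U := elimCols fun j => R 0 j.succ / R 0 0
  obtain rfl : R' = L * R * U := by
    rw [elimRows_mul_mul_elimCols_eq_schurComplement hd]
    exact ext hR'
  obtain rfl : Ω' = Ω.submatrix Fin.succ Fin.succ := ext hΩ'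
  obtain rfl : A' = A.submatrix Fin.succ Fin.succ := ext hA'
  obtain rfl : G' = L * G := ext fun i p => by simp [L, hG']
  obtain rfl : B' = B * U := ext fun p j => by simp [U, hB']
  calc
    _ = L * (Ω * (R * U)) - L * R * A * U := by
      rw [elimRows_mul_mul_of_row_zero_eq_zero _ (fun k => hΩ 0 k.succ k.succ_pos)
          (mul_elimCols_pivot_apply_zero hd),
        mul_mul_elimCols_of_col_zero_eq_zero _ (fun k => hA k.succ 0 k.succ_pos)
          (elimRows_pivot_mul_apply_zero hd), Matrix.mul_assoc]
    _ = L * (Ω * R - R * A) * U := by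
      simp only [Matrix.mul_sub, Matrix.sub_mul, Matrix.mul_assoc]
    _ = L * G * (B * U) := by
      rw [hdisp, Matrix.mul_assoc, Matrix.mul_assoc, Matrix.mul_assoc]
end

section
/- Let the polynomials {Q_k}_{k=0}^{n-1} and auxiliary polynomials {G_k}_{k=0}^{n-1} over ℂ satisfy EGO-type two-term recurrence relations with coefficients α_k, β_k, γ_k, δ_k, θ_k, and assume G₀ = 0. Then for every k = 1, …, n−1: Q_k(x) = (δ_k·x + θ_k)·Q_{k-1}(x) + Σ_{j=0}^{k-2} γ_k·(∏_{i=j+2}^{k-1} α_i)·β_{j+1}·Q_j(x). Equivalently, Q satisfies general recurrence relations with τ_k = δ_k, a_{k-1,k} = −θ_k, and a_{j,k} = −β_{j+1}·(∏_{i=j+2}^{k-1} α_i)·γ_k for j < k−1. -/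
open Polynomial Finset

/-! Unrolling the recurrence for `G` from `G 0 = 0` expresses `G (k - 1)` as a linear combination
of `Q 0, …, Q (k - 2)`; substituting this into the recurrence for `Q k` gives the claim. -/

theorem eq_sum_smul_of_eq_smul_add_smul {R M : Type*} [CommSemiring R] [AddCommMonoid M]
    [Module R M] {α β : ℕ → R} {Q G : ℕ → M} {N : ℕ} (hG0 : G 0 = 0)
    (hG : ∀ k < N, G (k + 1) = α (k + 1) • G k + β (k + 1) • Q k) :
    ∀ m ≤ N, G m = ∑ j ∈ range m, ((∏ i ∈ Ico (j + 2) (m + 1), α i) * β (j + 1)) • Q j := by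
  intro m hm
  induction m with
  | zero => simp [hG0]
  | succ m ih =>
    rw [hG m hm, ih (by omega), sum_range_succ, smul_sum, Ico_self, prod_empty, one_mul]
    congr 1
    refine sum_congr rfl fun j hj => ?_
    have hjm : j + 2 ≤ m + 1 := by have := mem_range.mp hj; omega
    rw [smul_smul, prod_Ico_succ_top hjm, mul_comm _ (α _), mul_assoc]

/-- quasiseparable polynomials satisfying EGO-type two-term
recurrence relations (with auxiliary polynomials `G`, `G 0 = 0`) satisfy the
general recurrence relations
`Q k = (δ k • x + θ k) * Q (k-1) + ∑_{j=0}^{k-2} γ k (∏_{i=j+2}^{k-1} α i) β (j+1) * Q j`,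
i.e. with `τ k = δ k`, `a (k-1) k = -θ k`, and
`a j k = -β (j+1) (∏_{i=j+2}^{k-1} α i) γ k` for `j < k - 1`. -/
theorem ego_to_general_recurrence (n : ℕ) (α β γ δ θ : ℕ → ℂ)
    (Q G : ℕ → Polynomial ℂ)
    (hG0 : G 0 = 0)
    (hrec : ∀ k, 1 ≤ k → k ≤ n - 1 →
      G k = C (α k) * G (k - 1) + C (β k) * Q (k - 1) ∧
      Q k = C (γ k) * G (k - 1) + (C (δ k) * X + C (θ k)) * Q (k - 1)) :
    ∀ k, 1 ≤ k → k ≤ n - 1 →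
      Q k = (C (δ k) * X + C (θ k)) * Q (k - 1)
        + ∑ j ∈ Finset.range (k - 1),
            C (γ k * (∏ i ∈ Finset.Ico (j + 2) k, α i) * β (j + 1)) * Q j := by
  have hG : ∀ m < n - 1, G (m + 1) = α (m + 1) • G m + β (m + 1) • Q m := fun m hm => by
    simpa only [C_mul', Nat.add_sub_cancel] using (hrec (m + 1) (by omega) hm).1
  intro k hk hkn
  obtain ⟨m, rfl⟩ := Nat.exists_eq_add_of_le' hk
  rw [(hrec _ hk hkn).2, Nat.add_sub_cancel,
    eq_sum_smul_of_eq_smul_add_smul hG0 hG m (by omega), add_comm]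
  simp only [C_mul', smul_sum, smul_smul, mul_assoc]
end

section
/- Let n ≥ 1 and t_j, α_i, β_j, γ_i ∈ ℂ. Define the row vectors g_j = (t_j, −β_j) ∈ ℂ^{1×2} for j = 1, …, n−1, the 2×2 matrices b_i = [[0, 0], [γ_i, α_i]] for i = 2, …, n−1, and the column vector h = (1, 0)ᵀ. Then for all indices with 1 ≤ j and j+1 < k ≤ n: g_j·b_{j+1}·b_{j+2}⋯b_{k-1}·h = −β_j·(∏_{i=j+1}^{k-2} α_i)·γ_{k-1}. Consequently, the unit upper triangular n×n matrix M̃ with diagonal entries 1, superdiagonal entries (M̃)_{j,j+1} = t_j, and entries (M̃)_{jk} = −β_j·(∏_{i=j+1}^{k-2} α_i)·γ_{k-1} for k > j+1 satisfies the quasiseparable generator representation (M̃)_{jk} = g_j·b_{j+1}⋯b_{k-1}·h for all k > j+1, so M̃ is upper triangular 2-quasiseparable. -/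
/-
A product `[[0, 0], [c, d]] * [[0, 0], [γ, α]]` is `[[0, 0], [d γ, d α]]`, so in
`b_a ⋯ b_k` the `(2,2)` entry accumulates the `α`'s and the `(2,1)` entry is the last `γ`
times the earlier `α`'s; applying `h = (1, 0)ᵀ` and then `g = (t, -β)` extracts `-β` times
that `(2,1)` entry.
-/

open Matrix Finset

/-- Ordered product `b a * b (a+1) * ⋯ * b (k-1)` of `2 × 2` matrices. -/
noncomputable def genProd (b : ℕ → Matrix (Fin 2) (Fin 2) ℂ) (a k : ℕ) :
    Matrix (Fin 2) (Fin 2) ℂ :=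
  ((List.range (k - a)).map (fun m => b (a + m))).prod

theorem genProd_self (b : ℕ → Matrix (Fin 2) (Fin 2) ℂ) (a : ℕ) : genProd b a a = 1 := by
  simp [genProd]

theorem genProd_succ (b : ℕ → Matrix (Fin 2) (Fin 2) ℂ) {a k : ℕ} (h : a ≤ k) :
    genProd b a (k + 1) = genProd b a k * b k := by
  rw [genProd, genProd, show k + 1 - a = k - a + 1 by omega, List.range_succ, List.map_append,
    List.prod_append, List.map_singleton, List.prod_singleton, Nat.add_sub_cancel' h]

theorem lowerRow_mul_lowerRow {R : Type*} [CommRing R] (c d γ α : R) :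
    !![0, 0; c, d] * !![0, 0; γ, α] = !![0, 0; d * γ, d * α] := by
  ext i j
  fin_cases i <;> fin_cases j <;> simp [Matrix.mul_apply]

theorem genProd_succ_eq_lowerRow (b : ℕ → Matrix (Fin 2) (Fin 2) ℂ) (α γ : ℕ → ℂ)
    (hb : ∀ i, b i = !![0, 0; γ i, α i]) {a k : ℕ} (h : a ≤ k) :
    genProd b a (k + 1) =
      !![0, 0; (∏ m ∈ Ico a k, α m) * γ k, ∏ m ∈ Ico a (k + 1), α m] := by
  induction k, h using Nat.le_induction with
  | base => simp [genProd_succ b le_rfl, genProd_self, hb]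
  | succ k hak ih =>
    rw [genProd_succ b (by omega), ih, hb, lowerRow_mul_lowerRow,
      prod_Ico_succ_top (by omega : a ≤ k + 1)]

theorem dotProduct_lowerRow_mulVec {R : Type*} [CommRing R] (t β c d : R) :
    ![t, -β] ⬝ᵥ !![0, 0; c, d] *ᵥ ![1, 0] = -β * c := by
  simp [dotProduct, Fin.sum_univ_two]

theorem quasiseparable_generators_M_general (n : ℕ) (t α β γ : ℕ → ℂ)
    (g : ℕ → Fin 2 → ℂ) (hg : ∀ j, g j = ![t j, -β j])
    (b : ℕ → Matrix (Fin 2) (Fin 2) ℂ) (hb : ∀ i, b i = !![0, 0; γ i, α i])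
    (hvec : Fin 2 → ℂ) (hh : hvec = ![1, 0])
    (M : Matrix (Fin n) (Fin n) ℂ)
    (hM : ∀ i j : Fin n, M i j =
      if (j : ℕ) < (i : ℕ) then 0
      else if (j : ℕ) = (i : ℕ) then 1
      else if (j : ℕ) = (i : ℕ) + 1 then t ((i : ℕ) + 1)
      else -β ((i : ℕ) + 1) * (∏ m ∈ Finset.Ico ((i : ℕ) + 2) (j : ℕ), α m) * γ (j : ℕ)) :
    (∀ j k : ℕ, 1 ≤ j → j + 1 < k → k ≤ n →
      g j ⬝ᵥ (genProd b (j + 1) k).mulVec hvec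
        = -β j * (∏ i ∈ Finset.Ico (j + 1) (k - 1), α i) * γ (k - 1)) ∧
    (∀ i j : Fin n, (i : ℕ) + 1 < (j : ℕ) →
      M i j = g ((i : ℕ) + 1) ⬝ᵥ (genProd b ((i : ℕ) + 2) ((j : ℕ) + 1)).mulVec hvec) ∧
    (∀ i j : Fin n, (j : ℕ) = (i : ℕ) + 1 →
      M i j = g ((i : ℕ) + 1) ⬝ᵥ hvec) := by
  have generator_product (j k : ℕ) (hjk : j + 1 ≤ k) :
      g j ⬝ᵥ (genProd b (j + 1) (k + 1)).mulVec hvec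
        = -β j * (∏ i ∈ Ico (j + 1) k, α i) * γ k := by
    rw [genProd_succ_eq_lowerRow b α γ hb hjk, hg, hh, dotProduct_lowerRow_mulVec, mul_assoc]
  refine ⟨fun j k _ hjk _ => ?_, fun i j hij => ?_, fun i j hij => ?_⟩
  · obtain ⟨k, rfl⟩ : ∃ k', k = k' + 1 := ⟨k - 1, by omega⟩
    exact generator_product j k (by omega)
  · rw [generator_product _ _ hij, hM, if_neg (by omega), if_neg (by omega), if_neg (by omega)]
  · rw [hM, if_neg (by omega), if_neg (by omega), if_pos hij, hg, hh]
    simp [dotProduct, Fin.sum_univ_two]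

/-- the quasiseparable generators `g_j = (t_j, -β_j)`,
`b_i = [[0,0],[γ_i, α_i]]`, `h = (1,0)ᵀ` satisfy
`g_j b_{j+1} ⋯ b_{k-1} h = -β_j (∏_{i=j+1}^{k-2} α_i) γ_{k-1}` for
`1 ≤ j`, `j+1 < k ≤ n`; consequently the unit upper triangular matrix `M`
with superdiagonal entries `t_j` and entries
`-β_j (∏_{i=j+1}^{k-2} α_i) γ_{k-1}` above the superdiagonal admits the
2-quasiseparable generator representation. -/
theorem quasiseparable_generators_M (n : ℕ) (hn : 1 ≤ n) (t α β γ : ℕ → ℂ)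
    (g : ℕ → Fin 2 → ℂ) (hg : ∀ j, g j = ![t j, -β j])
    (b : ℕ → Matrix (Fin 2) (Fin 2) ℂ) (hb : ∀ i, b i = !![0, 0; γ i, α i])
    (hvec : Fin 2 → ℂ) (hh : hvec = ![1, 0])
    (M : Matrix (Fin n) (Fin n) ℂ)
    (hM : ∀ i j : Fin n, M i j =
      if (j : ℕ) < (i : ℕ) then 0
      else if (j : ℕ) = (i : ℕ) then 1
      else if (j : ℕ) = (i : ℕ) + 1 then t ((i : ℕ) + 1)
      else -β ((i : ℕ) + 1) * (∏ m ∈ Finset.Ico ((i : ℕ) + 2) (j : ℕ), α m) * γ (j : ℕ)) :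
    (∀ j k : ℕ, 1 ≤ j → j + 1 < k → k ≤ n →
      g j ⬝ᵥ (genProd b (j + 1) k).mulVec hvec
        = -β j * (∏ i ∈ Finset.Ico (j + 1) (k - 1), α i) * γ (k - 1)) ∧
    (∀ i j : Fin n, (i : ℕ) + 1 < (j : ℕ) →
      M i j = g ((i : ℕ) + 1) ⬝ᵥ (genProd b ((i : ℕ) + 2) ((j : ℕ) + 1)).mulVec hvec) ∧
    (∀ i j : Fin n, (j : ℕ) = (i : ℕ) + 1 →
      M i j = g ((i : ℕ) + 1) ⬝ᵥ hvec) :=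
  quasiseparable_generators_M_general n t α β γ g hg b hb hvec hh M hM
end

section
/- Let n ≥ 1 and t_j, α_i, β_j, γ_i ∈ ℂ with the convention β₀ = 1. Define the row vectors g_j = (t_j, −β_{j-1}) ∈ ℂ^{1×2} for j = 1, …, n−1, the 2×2 matrices b_i = [[0, 0], [γ_i·(α_{i-1} − β_{i-1}·γ_{i-1}), α_{i-1} − β_{i-1}·γ_{i-1}]] for i = 2, …, n−1, and the column vector h = (1, 0)ᵀ. Then for all indices with 1 ≤ j and j+1 < k ≤ n: g_j·b_{j+1}·b_{j+2}⋯b_{k-1}·h = −β_{j-1}·(∏_{i=j}^{k-2} (α_i − β_i·γ_i))·γ_{k-1}. Consequently, the unit upper triangular n×n matrix with superdiagonal entries t_j and (j,k) entries −β_{j-1}·(∏_{i=j}^{k-2}(α_i − β_i·γ_i))·γ_{k-1} for k > j+1 is upper triangular 2-quasiseparable with these generators. -/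
/-!
Each `b_i` has zero first row, so `e₂ = (0, 1)ᵀ` is an eigenvector of `b_i` with eigenvalue
`α_{i-1} - β_{i-1} γ_{i-1}`, and `b_i e₁ = γ_i (α_{i-1} - β_{i-1} γ_{i-1}) e₂`. Hence in
`b_{j+1} ⋯ b_{k-1} h` the last factor sends `h = e₁` to a multiple of `e₂`, every other factor
multiplies it by its eigenvalue, and `g_j` reads off the second coordinate times `-β_{j-1}`.
-/

open Matrix Finset

section genProd

variable (b : ℕ → Matrix (Fin 2) (Fin 2) ℂ)

lemma genProd_of_le {a k : ℕ} (h : k ≤ a) : genProd b a k = 1 := by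
  simp [genProd, Nat.sub_eq_zero_of_le h]

lemma genProd_succ_right {a k : ℕ} (h : a ≤ k) : genProd b a (k + 1) = genProd b a k * b k := by
  rw [genProd, genProd, Nat.sub_add_comm h, List.range_succ, List.map_append, List.prod_append,
    List.map_singleton, List.prod_singleton, Nat.add_sub_cancel' h]

variable {b}

lemma genProd_mulVec_of_mulVec_eq_smul {v : Fin 2 → ℂ} {μ : ℕ → ℂ}
    (hv : ∀ i, b i *ᵥ v = μ i • v) (a k : ℕ) :
    genProd b a k *ᵥ v = (∏ i ∈ Ico a k, μ i) • v := by
  rcases le_or_gt a k with hak | hka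
  · induction k, hak using Nat.le_induction with
    | base => simp [genProd_of_le]
    | succ k hak ih =>
      rw [genProd_succ_right b hak, ← mulVec_mulVec, hv, mulVec_smul, ih, smul_smul,
        prod_Ico_succ_top hak, mul_comm]
  · simp [genProd_of_le b hka.le, Ico_eq_empty_of_le hka.le]

end genProd

section LowerRow

variable {R : Type*} [Semiring R]

lemma lowerRow_mulVec_e₁ (x y : R) : !![0, 0; x, y] *ᵥ ![1, 0] = x • ![0, 1] := by
  ext i; fin_cases i <;> simp [mulVec, dotProduct, Fin.sum_univ_two]

lemma lowerRow_mulVec_e₂ (x y : R) : !![0, 0; x, y] *ᵥ ![0, 1] = y • ![0, 1] := by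
  ext i; fin_cases i <;> simp [mulVec, dotProduct, Fin.sum_univ_two]

end LowerRow

lemma prod_Ico_pred_mul {M : Type*} [CommMonoid M] (c : ℕ → M) {j m : ℕ} (h : j < m) :
    (∏ i ∈ Ico (j + 1) m, c (i - 1)) * c (m - 1) = ∏ i ∈ Ico j m, c i := by
  obtain ⟨m, rfl⟩ := Nat.exists_eq_add_of_lt h
  rw [← prod_Ico_add' (fun i => c (i - 1)), prod_Ico_succ_top (by omega)]
  simp

lemma genProd_mulVec_e₁ {γ c : ℕ → ℂ} {b : ℕ → Matrix (Fin 2) (Fin 2) ℂ}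
    (hb : ∀ i, b i = !![0, 0; γ i * c (i - 1), c (i - 1)]) {j k : ℕ} (hjk : j + 1 < k) :
    genProd b (j + 1) k *ᵥ ![1, 0] = ((∏ i ∈ Ico j (k - 1), c i) * γ (k - 1)) • ![0, 1] := by
  obtain ⟨m, rfl⟩ : ∃ m, k = m + 1 := ⟨k - 1, by omega⟩
  have heigen : ∀ i, b i *ᵥ ![0, 1] = c (i - 1) • ![0, 1] := fun i => by
    rw [hb, lowerRow_mulVec_e₂]
  rw [genProd_succ_right b (by omega), ← mulVec_mulVec, hb, lowerRow_mulVec_e₁, mulVec_smul,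
    genProd_mulVec_of_mulVec_eq_smul heigen, smul_smul, Nat.add_sub_cancel,
    ← prod_Ico_pred_mul c (by omega : j < m)]
  congr 1
  ring

theorem semiseparable_generators_M_general (n : ℕ) (t α β γ : ℕ → ℂ)
    (g : ℕ → Fin 2 → ℂ) (hg : ∀ j, g j = ![t j, -β (j - 1)])
    (b : ℕ → Matrix (Fin 2) (Fin 2) ℂ)
    (hb : ∀ i, b i = !![0, 0;
      γ i * (α (i - 1) - β (i - 1) * γ (i - 1)), α (i - 1) - β (i - 1) * γ (i - 1)])
    (hvec : Fin 2 → ℂ) (hh : hvec = ![1, 0])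
    (M : Matrix (Fin n) (Fin n) ℂ)
    (hM : ∀ i j : Fin n, M i j =
      if (j : ℕ) < (i : ℕ) then 0
      else if (j : ℕ) = (i : ℕ) then 1
      else if (j : ℕ) = (i : ℕ) + 1 then t ((i : ℕ) + 1)
      else -β (i : ℕ) *
        (∏ m ∈ Finset.Ico ((i : ℕ) + 1) (j : ℕ), (α m - β m * γ m)) * γ (j : ℕ)) :
    (∀ j k : ℕ, 1 ≤ j → j + 1 < k → k ≤ n →
      g j ⬝ᵥ (genProd b (j + 1) k).mulVec hvec
        = -β (j - 1) * (∏ i ∈ Finset.Ico j (k - 1), (α i - β i * γ i)) * γ (k - 1)) ∧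
    (∀ i j : Fin n, (i : ℕ) + 1 < (j : ℕ) →
      M i j = g ((i : ℕ) + 1) ⬝ᵥ (genProd b ((i : ℕ) + 2) ((j : ℕ) + 1)).mulVec hvec) ∧
    (∀ i j : Fin n, (j : ℕ) = (i : ℕ) + 1 →
      M i j = g ((i : ℕ) + 1) ⬝ᵥ hvec) := by
  have generator_product : ∀ j k : ℕ, j + 1 < k →
      g j ⬝ᵥ (genProd b (j + 1) k).mulVec hvec
        = -β (j - 1) * (∏ i ∈ Finset.Ico j (k - 1), (α i - β i * γ i)) * γ (k - 1) := by
    intro j k hjk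
    rw [hg, hh, genProd_mulVec_e₁ (c := fun i => α i - β i * γ i) hb hjk]
    simp [dotProduct, Fin.sum_univ_two]
    ring
  refine ⟨fun j k _ hjk _ => generator_product j k hjk, fun i j hij => ?_, fun i j hij => ?_⟩
  · rw [generator_product _ _ (by omega), hM, if_neg (by omega), if_neg (by omega),
      if_neg (by omega)]
    simp
  · rw [hM, if_neg (by omega), if_neg (by omega), if_pos hij, hg, hh]
    simp [dotProduct, Fin.sum_univ_two]

/-- the semiseparable generators `g_j = (t_j, -β_{j-1})`,
`b_i = [[0,0],[γ_i (α_{i-1} - β_{i-1} γ_{i-1}), α_{i-1} - β_{i-1} γ_{i-1}]]`,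
`h = (1,0)ᵀ` (with the convention `β 0 = 1`) satisfy
`g_j b_{j+1} ⋯ b_{k-1} h = -β_{j-1} (∏_{i=j}^{k-2} (α_i - β_i γ_i)) γ_{k-1}`
for `1 ≤ j`, `j+1 < k ≤ n`; consequently the corresponding unit upper
triangular matrix `M` is 2-quasiseparable with these generators. -/
theorem semiseparable_generators_M (n : ℕ) (hn : 1 ≤ n) (t α β γ : ℕ → ℂ)
    (hβ0 : β 0 = 1)
    (g : ℕ → Fin 2 → ℂ) (hg : ∀ j, g j = ![t j, -β (j - 1)])
    (b : ℕ → Matrix (Fin 2) (Fin 2) ℂ)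
    (hb : ∀ i, b i = !![0, 0;
      γ i * (α (i - 1) - β (i - 1) * γ (i - 1)), α (i - 1) - β (i - 1) * γ (i - 1)])
    (hvec : Fin 2 → ℂ) (hh : hvec = ![1, 0])
    (M : Matrix (Fin n) (Fin n) ℂ)
    (hM : ∀ i j : Fin n, M i j =
      if (j : ℕ) < (i : ℕ) then 0
      else if (j : ℕ) = (i : ℕ) then 1
      else if (j : ℕ) = (i : ℕ) + 1 then t ((i : ℕ) + 1)
      else -β (i : ℕ) *
        (∏ m ∈ Finset.Ico ((i : ℕ) + 1) (j : ℕ), (α m - β m * γ m)) * γ (j : ℕ)) :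
    (∀ j k : ℕ, 1 ≤ j → j + 1 < k → k ≤ n →
      g j ⬝ᵥ (genProd b (j + 1) k).mulVec hvec
        = -β (j - 1) * (∏ i ∈ Finset.Ico j (k - 1), (α i - β i * γ i)) * γ (k - 1)) ∧
    (∀ i j : Fin n, (i : ℕ) + 1 < (j : ℕ) →
      M i j = g ((i : ℕ) + 1) ⬝ᵥ (genProd b ((i : ℕ) + 2) ((j : ℕ) + 1)).mulVec hvec) ∧
    (∀ i j : Fin n, (j : ℕ) = (i : ℕ) + 1 →
      M i j = g ((i : ℕ) + 1) ⬝ᵥ hvec) :=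
  semiseparable_generators_M_general n t α β γ g hg b hb hvec hh M hM
end

section
/- Let the polynomials {Q_k}_{k=0}^{n-1} over ℂ satisfy well-free (generalized three-term) recurrence relations with coefficients α_k, β_k, γ_k, δ_k, where every α_k ≠ 0, with the conventions α₀ = 1 and β₁ = 0. Define d_m = δ_m/α_m + β_m/(α_{m-1}·α_m), g_m = (d_m·β_{m+1} + γ_{m+1})/α_{m+1}, and b_m = β_{m+1}/α_{m+1}. Then for every k = 2, …, n−1: Q_k(x) = α_k·x·Q_{k-1}(x) − (δ_k + β_k/α_{k-1})·Q_{k-1}(x) − (d_{k-1}·β_k + γ_k)·Q_{k-2}(x) − β_k·Σ_{j=0}^{k-3} g_{j+1}·(∏_{i=j+2}^{k-2} b_i)·Q_j(x). Equivalently, Q satisfies general recurrence relations with τ_k = α_k, a_{k-1,k} = δ_k + β_k/α_{k-1}, a_{k-2,k} = d_{k-1}·β_k + γ_k, and a_{j,k} = g_{j+1}·(∏_{i=j+2}^{k-2} b_i)·β_k for j ≤ k−3. -/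
open Polynomial Finset

/-!
Dividing the three-term relation at `m + 1` by `α (m + 1)` expresses `X * Q m` as
`Q (m + 1) / α (m + 1) + d (m + 1) * Q m` plus a combination of `Q 0, …, Q (m - 1)`.
Substituting this expansion of `X * Q (k - 2)` into the three-term relation at `k` gives the
general recurrence at `k`; dividing that by `α k` in turn gives the expansion of `X * Q (k - 1)`,
whose lower-order part is `g (k - 1) * Q (k - 2)` plus `b (k - 1)` times the previous one.
This is where the products `∏ b i` come from.
-/

theorem sum_range_succ_C_mul_prod_Ico {R : Type*} [CommSemiring R] (c b : ℕ → R)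
    (P : ℕ → R[X]) (m : ℕ) :
    ∑ j ∈ range (m + 1), C (c j * ∏ i ∈ Ico (j + 2) (m + 2), b i) * P j
      = C (c m) * P m
        + C (b (m + 1)) *
          ∑ j ∈ range m, C (c j * ∏ i ∈ Ico (j + 2) (m + 1), b i) * P j := by
  rw [sum_range_succ, Ico_self, prod_empty, mul_one, mul_sum, add_comm]
  congr 1
  refine sum_congr rfl fun j hj => ?_
  rw [prod_Ico_succ_top (by rw [mem_range] at hj; omega), C_mul, C_mul, C_mul]
  ring

section

variable {K : Type*} [Field K]

theorem eq_sub_of_three_term_of_X_mul {a a' b c e d : K} {P₀ P₁ P₂ S : K[X]}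
    (h : P₂ = (C a * X - C e) * P₁ - (C b * X + C c) * P₀)
    (hX : X * P₀ = C a'⁻¹ * P₁ + C d * P₀ + S) :
    P₂ = C a * X * P₁ - C (e + b / a') * P₁ - C (d * b + c) * P₀ - C b * S := by
  rw [h, div_eq_mul_inv, C_add, C_mul, C_add, C_mul]
  linear_combination (-C b) * hX

theorem X_mul_eq_of_wellfree {n : ℕ} {α β γ δ d g b : ℕ → K} {Q : ℕ → K[X]}
    (hα : ∀ k, α (k + 1) ≠ 0) (hβ1 : β 1 = 0)
    (hQ1 : Q 1 = (C (α 1) * X - C (δ 1)) * Q 0)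
    (hrec : ∀ k, k + 2 ≤ n → Q (k + 2) = (C (α (k + 2)) * X - C (δ (k + 2))) * Q (k + 1)
      - (C (β (k + 2)) * X + C (γ (k + 2))) * Q k)
    (hd : ∀ m, d (m + 1) = δ (m + 1) / α (m + 1) + β (m + 1) / (α m * α (m + 1)))
    (hg : ∀ m, g m = (d m * β (m + 1) + γ (m + 1)) / α (m + 1))
    (hb : ∀ m, b m = β (m + 1) / α (m + 1)) :
    ∀ m, m + 1 ≤ n →
      X * Q m = C (α (m + 1))⁻¹ * Q (m + 1) + C (d (m + 1)) * Q m
        + ∑ j ∈ range m, C (g (j + 1) * ∏ i ∈ Ico (j + 2) (m + 1), b i) * Q j := by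
  intro m
  induction m with
  | zero =>
    intro _
    simp only [zero_add]
    have hd1 : d 1 = (α 1)⁻¹ * δ 1 := by rw [hd 0, hβ1, zero_div, add_zero, div_eq_inv_mul]
    have hinv : C (α 1)⁻¹ * C (α 1) = 1 := by rw [← C_mul, inv_mul_cancel₀ (hα 0), C_1]
    rw [hQ1, hd1, range_zero, sum_empty, add_zero, C_mul]
    linear_combination (-(X * Q 0)) * hinv
  | succ m ih =>
    intro hm
    have hgen := eq_sub_of_three_term_of_X_mul (hrec m hm) (ih (by omega))
    have hinv : C (α (m + 2))⁻¹ * C (α (m + 2)) = 1 := by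
      rw [← C_mul, inv_mul_cancel₀ (hα (m + 1)), C_1]
    rw [sum_range_succ_C_mul_prod_Ico, hd, hg, hb]
    simp only [div_eq_mul_inv, mul_inv, C_add, C_mul] at hgen ⊢
    linear_combination (-(C (α (m + 2))⁻¹)) * hgen - (X * Q (m + 1)) * hinv

end

theorem wellfree_to_general_recurrence_general (n : ℕ) (α β γ δ : ℕ → ℂ)
    (hα : ∀ k, α k ≠ 0) (hβ1 : β 1 = 0)
    (Q : ℕ → Polynomial ℂ)
    (hQ1 : Q 1 = (C (α 1) * X - C (δ 1)) * Q 0)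
    (hrec : ∀ k, 2 ≤ k → k ≤ n - 1 →
      Q k = (C (α k) * X - C (δ k)) * Q (k - 1) - (C (β k) * X + C (γ k)) * Q (k - 2))
    (d g b : ℕ → ℂ)
    (hd : ∀ m, d m = δ m / α m + β m / (α (m - 1) * α m))
    (hg : ∀ m, g m = (d m * β (m + 1) + γ (m + 1)) / α (m + 1))
    (hb : ∀ m, b m = β (m + 1) / α (m + 1)) :
    ∀ k, 2 ≤ k → k ≤ n - 1 →
      Q k = C (α k) * X * Q (k - 1)
        - C (δ k + β k / α (k - 1)) * Q (k - 1)
        - C (d (k - 1) * β k + γ k) * Q (k - 2)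
        - C (β k) * ∑ j ∈ Finset.range (k - 2),
            C (g (j + 1) * ∏ i ∈ Finset.Ico (j + 2) (k - 1), b i) * Q j := by
  have hrec' : ∀ k, k + 2 ≤ n - 1 →
      Q (k + 2) = (C (α (k + 2)) * X - C (δ (k + 2))) * Q (k + 1)
        - (C (β (k + 2)) * X + C (γ (k + 2))) * Q k :=
    fun k hk => hrec (k + 2) (by omega) hk
  have hX := X_mul_eq_of_wellfree (fun k => hα (k + 1)) hβ1 hQ1 hrec' (fun m => hd (m + 1)) hg hb
  intro k hk hkn
  obtain ⟨m, rfl⟩ : ∃ m, k = m + 2 := ⟨k - 2, by omega⟩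
  exact eq_sub_of_three_term_of_X_mul (hrec' m hkn) (hX m (by omega))

/-- well-free polynomials satisfying generalized three-term
recurrence relations (with `α k ≠ 0`, conventions `α 0 = 1`, `β 1 = 0`) satisfy
the general recurrence relations with `τ k = α k`,
`a (k-1) k = δ k + β k / α (k-1)`, `a (k-2) k = d (k-1) β k + γ k`, and
`a j k = g (j+1) (∏_{i=j+2}^{k-2} b i) β k` for `j ≤ k - 3`, where
`d m = δ m / α m + β m / (α (m-1) α m)`,
`g m = (d m β (m+1) + γ (m+1)) / α (m+1)` and `b m = β (m+1) / α (m+1)`. -/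
theorem wellfree_to_general_recurrence (n : ℕ) (α β γ δ : ℕ → ℂ)
    (hα : ∀ k, α k ≠ 0) (hα0 : α 0 = 1) (hβ1 : β 1 = 0)
    (Q : ℕ → Polynomial ℂ)
    (hQ1 : Q 1 = (C (α 1) * X - C (δ 1)) * Q 0)
    (hrec : ∀ k, 2 ≤ k → k ≤ n - 1 →
      Q k = (C (α k) * X - C (δ k)) * Q (k - 1) - (C (β k) * X + C (γ k)) * Q (k - 2))
    (d g b : ℕ → ℂ)
    (hd : ∀ m, d m = δ m / α m + β m / (α (m - 1) * α m))
    (hg : ∀ m, g m = (d m * β (m + 1) + γ (m + 1)) / α (m + 1))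
    (hb : ∀ m, b m = β (m + 1) / α (m + 1)) :
    ∀ k, 2 ≤ k → k ≤ n - 1 →
      Q k = C (α k) * X * Q (k - 1)
        - C (δ k + β k / α (k - 1)) * Q (k - 1)
        - C (d (k - 1) * β k + γ k) * Q (k - 2)
        - C (β k) * ∑ j ∈ Finset.range (k - 2),
            C (g (j + 1) * ∏ i ∈ Finset.Ico (j + 2) (k - 1), b i) * Q j :=
  wellfree_to_general_recurrence_general n α β γ δ hα hβ1 Q hQ1 hrec d g b hd hg hb
end

section
/- Let n ≥ 2 and α_m, β_m, γ_m, δ_m, θ_m ∈ ℂ with all δ_m ≠ 0. Define the general-recurrence coefficients of quasiseparable polynomials by a_{j,k} = −β_{j+1}·(∏_{i=j+2}^{k-1} α_i)·γ_k for j < k−1 and a_{k-1,k} = −θ_k, with τ_k = δ_k, and define the hat coefficients â_{j,k} = (δ_{n-k}/δ_{n-j})·a_{n-k,n-j} for j < k. Define the hat generators α̂_k = α_{n-k+1}, β̂_k = γ_{n-k+1}/δ_{n-k+1}, γ̂_k = β_{n-k+1}·δ_{n-k}, δ̂_k = δ_{n-k}, θ̂_k = (δ_{n-k}/δ_{n-k+1})·θ_{n-k+1}.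 Then for all indices 0 ≤ j < k−1 ≤ n−2: â_{j,k} = −β̂_{j+1}·(∏_{i=j+2}^{k-1} α̂_i)·γ̂_k, and for j = k−1: â_{k-1,k} = −θ̂_k. In other words, the generalized associated polynomials of a quasiseparable system are again quasiseparable, satisfying EGO-type recurrences with the hat generators. -/
open Finset

/-! The hat coefficients are the original ones read along the reversed index `i ↦ n + 1 - i`:
under this reflection the `α`-product of `a (n - k) (n - j)` becomes that of the hat generators,
and the `δ`-quotient in `ahat` is absorbed into `β̂` and `γ̂` (resp. `θ̂`). -/

lemma prod_Ico_comp_sub_add_one {M : Type*} [CommMonoid M] (f : ℕ → M) {n j k : ℕ}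
    (hk : k ≤ n) :
    ∏ i ∈ Ico (j + 2) k, f (n - i + 1) = ∏ i ∈ Ico (n - k + 2) (n - j), f i := by
  have hreflect : ∏ i ∈ Ico (j + 2) k, f (n - i + 1) = ∏ i ∈ Ico (j + 2) k, f (n + 1 - i) :=
    prod_congr rfl fun i hi => congrArg f (by rw [mem_Ico] at hi; omega)
  rw [hreflect, prod_Ico_reflect f (j + 2) (by omega)]
  congr 2 <;> omega

theorem associated_quasiseparable_general (n : ℕ) (α β γ δ θ : ℕ → ℂ)
    (a ahat : ℕ → ℕ → ℂ)
    (ha1 : ∀ j k, j + 1 < k →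
      a j k = -β (j + 1) * (∏ i ∈ Finset.Ico (j + 2) k, α i) * γ k)
    (ha2 : ∀ k, 1 ≤ k → a (k - 1) k = -θ k)
    (hahat : ∀ j k, j < k → ahat j k = (δ (n - k) / δ (n - j)) * a (n - k) (n - j))
    (αh βh γh θh : ℕ → ℂ)
    (hαh : ∀ k, αh k = α (n - k + 1))
    (hβh : ∀ k, βh k = γ (n - k + 1) / δ (n - k + 1))
    (hγh : ∀ k, γh k = β (n - k + 1) * δ (n - k))
    (hθh : ∀ k, θh k = (δ (n - k) / δ (n - k + 1)) * θ (n - k + 1)) :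
    (∀ j k, j + 1 < k → k ≤ n - 1 →
      ahat j k = -βh (j + 1) * (∏ i ∈ Finset.Ico (j + 2) k, αh i) * γh k) ∧
    (∀ k, 1 ≤ k → k ≤ n - 1 → ahat (k - 1) k = -θh k) := by
  constructor
  · intro j k hjk hkn
    have hj : n - (j + 1) + 1 = n - j := by omega
    simp only [hahat j k (by omega), ha1 (n - k) (n - j) (by omega), hβh, hγh, hαh, hj,
      prod_Ico_comp_sub_add_one α (by omega : k ≤ n)]
    ring
  · intro k hk1 hkn
    have hdiag := ha2 (n - k + 1) (by omega)
    rw [Nat.add_sub_cancel] at hdiag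
    rw [hahat (k - 1) k (by omega), hθh, show n - (k - 1) = n - k + 1 by omega, hdiag]
    ring

/-- the generalized associated polynomials of a quasiseparable
system are again quasiseparable.  With the general-recurrence coefficients
`a j k = -β (j+1) (∏_{i=j+2}^{k-1} α i) γ k` (for `j < k-1`),
`a (k-1) k = -θ k`, the hat coefficients
`ahat j k = (δ (n-k) / δ (n-j)) * a (n-k) (n-j)`, and the hat generators
`α̂ k = α (n-k+1)`, `β̂ k = γ (n-k+1)/δ (n-k+1)`, `γ̂ k = β (n-k+1) δ (n-k)`,
`δ̂ k = δ (n-k)`, `θ̂ k = (δ (n-k)/δ (n-k+1)) θ (n-k+1)`, we have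
`ahat j k = -β̂ (j+1) (∏_{i=j+2}^{k-1} α̂ i) γ̂ k` for `j < k-1 ≤ n-2` and
`ahat (k-1) k = -θ̂ k`. -/
theorem associated_quasiseparable (n : ℕ) (hn : 2 ≤ n) (α β γ δ θ : ℕ → ℂ)
    (hδ : ∀ m, δ m ≠ 0)
    (a ahat : ℕ → ℕ → ℂ)
    (ha1 : ∀ j k, j + 1 < k →
      a j k = -β (j + 1) * (∏ i ∈ Finset.Ico (j + 2) k, α i) * γ k)
    (ha2 : ∀ k, 1 ≤ k → a (k - 1) k = -θ k)
    (hahat : ∀ j k, j < k → ahat j k = (δ (n - k) / δ (n - j)) * a (n - k) (n - j))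
    (αh βh γh δh θh : ℕ → ℂ)
    (hαh : ∀ k, αh k = α (n - k + 1))
    (hβh : ∀ k, βh k = γ (n - k + 1) / δ (n - k + 1))
    (hγh : ∀ k, γh k = β (n - k + 1) * δ (n - k))
    (hδh : ∀ k, δh k = δ (n - k))
    (hθh : ∀ k, θh k = (δ (n - k) / δ (n - k + 1)) * θ (n - k + 1)) :
    (∀ j k, j + 1 < k → k ≤ n - 1 →
      ahat j k = -βh (j + 1) * (∏ i ∈ Finset.Ico (j + 2) k, αh i) * γh k) ∧
    (∀ k, 1 ≤ k → k ≤ n - 1 → ahat (k - 1) k = -θh k) :=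
  associated_quasiseparable_general n α β γ δ θ a ahat ha1 ha2 hahat αh βh γh θh hαh hβh hγh hθh
end

section
/- Let n ≥ 2 and α_m, β_m, γ_m, δ_m, θ_m ∈ ℂ with all δ_m ≠ 0. Define the general-recurrence coefficients of semiseparable polynomials by a_{j,k} = −β_j·(∏_{i=j+1}^{k-1} (α_i − β_i·γ_i))·γ_k for j < k−1 and a_{k-1,k} = −(θ_k + γ_k·β_{k-1}), with τ_k = δ_k, and define the hat coefficients â_{j,k} = (δ_{n-k}/δ_{n-j})·a_{n-k,n-j} for j < k. Define the hat generators α̂_k = α_{n-k}, β̂_k = γ_{n-k}/δ_{n-k}, γ̂_k = β_{n-k}·δ_{n-k}, δ̂_k = δ_{n-k}, θ̂_k = (δ_{n-k}/δ_{n-k+1})·θ_{n-k+1}. Then for all indices 0 ≤ j < k−1 ≤ n−2: â_{j,k} = −β̂_j·(∏_{i=j+1}^{k-1} (α̂_i − β̂_i·γ̂_i))·γ̂_k, and for j = k−1: â_{k-1,k} = −(θ̂_k + γ̂_k·β̂_{k-1}). In other words, the generalized associated polynomials of a semiseparable system are again semiseparable, satisfying Szegő-type two-term recurrences with the hat generators.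 -/
open Finset

/- Reversing the index `m ↦ n - m` turns the coefficients `a (n-k) (n-j)` of the original system
into those of the associated one. The only nontrivial point is that the hat generators leave the
factors of the products invariant: `α̂ i - β̂ i γ̂ i = α (n-i) - β (n-i) γ (n-i)`, since `δ (n-i)`
cancels in `β̂ i γ̂ i`. The product over `(j, k)` is then the reflected product over
`(n-k, n-j)`, and what remains is a ring identity in the outer factors. -/

theorem associated_semiseparable_general (n : ℕ) (α β γ δ θ : ℕ → ℂ)
    (hδ : ∀ m, δ m ≠ 0)
    (a ahat : ℕ → ℕ → ℂ)
    (ha1 : ∀ j k, j + 1 < k →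
      a j k = -β j * (∏ i ∈ Finset.Ico (j + 1) k, (α i - β i * γ i)) * γ k)
    (ha2 : ∀ k, 1 ≤ k → a (k - 1) k = -(θ k + γ k * β (k - 1)))
    (hahat : ∀ j k, j < k → ahat j k = (δ (n - k) / δ (n - j)) * a (n - k) (n - j))
    (αh βh γh θh : ℕ → ℂ)
    (hαh : ∀ k, αh k = α (n - k))
    (hβh : ∀ k, βh k = γ (n - k) / δ (n - k))
    (hγh : ∀ k, γh k = β (n - k) * δ (n - k))
    (hθh : ∀ k, θh k = (δ (n - k) / δ (n - k + 1)) * θ (n - k + 1)) :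
    (∀ j k, j + 1 < k → k ≤ n - 1 →
      ahat j k = -βh j * (∏ i ∈ Finset.Ico (j + 1) k, (αh i - βh i * γh i)) * γh k) ∧
    (∀ k, 1 ≤ k → k ≤ n - 1 → ahat (k - 1) k = -(θh k + γh k * βh (k - 1))) := by
  have hfactor (i : ℕ) : αh i - βh i * γh i = α (n - i) - β (n - i) * γ (n - i) := by
    rw [hαh, hβh, hγh]
    field_simp [hδ (n - i)]
  refine ⟨fun j k hjk hk => ?_, fun k hk₁ hk => ?_⟩
  · have hprod : ∏ i ∈ Ico (j + 1) k, (αh i - βh i * γh i)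
        = ∏ i ∈ Ico (n - k + 1) (n - j), (α i - β i * γ i) := by
      rw [prod_congr rfl fun i _ => hfactor i, prod_Ico_reflect (fun i => α i - β i * γ i) _
        (by omega), show n + 1 - k = n - k + 1 by omega, Nat.add_sub_add_right]
    rw [hahat j k (by omega), ha1 (n - k) (n - j) (by omega), hprod, hβh, hγh]
    ring
  · have hsub : n - (k - 1) = n - k + 1 := by omega
    have ha2' : a (n - k) (n - k + 1) = -(θ (n - k + 1) + γ (n - k + 1) * β (n - k)) := by
      simpa using ha2 (n - k + 1) le_add_self
    rw [hahat (k - 1) k (by omega), hsub, ha2', hθh, hγh, hβh, hsub]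
    ring

/-- the generalized associated polynomials of a semiseparable
system are again semiseparable.  With the general-recurrence coefficients
`a j k = -β j (∏_{i=j+1}^{k-1} (α i - β i γ i)) γ k` (for `j < k-1`),
`a (k-1) k = -(θ k + γ k β (k-1))`, the hat coefficients
`ahat j k = (δ (n-k) / δ (n-j)) * a (n-k) (n-j)`, and the hat generators
`α̂ k = α (n-k)`, `β̂ k = γ (n-k)/δ (n-k)`, `γ̂ k = β (n-k) δ (n-k)`,
`δ̂ k = δ (n-k)`, `θ̂ k = (δ (n-k)/δ (n-k+1)) θ (n-k+1)`, we have
`ahat j k = -β̂ j (∏_{i=j+1}^{k-1} (α̂ i - β̂ i γ̂ i)) γ̂ k` for `j < k-1 ≤ n-2`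
and `ahat (k-1) k = -(θ̂ k + γ̂ k β̂ (k-1))`. -/
theorem associated_semiseparable (n : ℕ) (hn : 2 ≤ n) (α β γ δ θ : ℕ → ℂ)
    (hδ : ∀ m, δ m ≠ 0)
    (a ahat : ℕ → ℕ → ℂ)
    (ha1 : ∀ j k, j + 1 < k →
      a j k = -β j * (∏ i ∈ Finset.Ico (j + 1) k, (α i - β i * γ i)) * γ k)
    (ha2 : ∀ k, 1 ≤ k → a (k - 1) k = -(θ k + γ k * β (k - 1)))
    (hahat : ∀ j k, j < k → ahat j k = (δ (n - k) / δ (n - j)) * a (n - k) (n - j))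
    (αh βh γh δh θh : ℕ → ℂ)
    (hαh : ∀ k, αh k = α (n - k))
    (hβh : ∀ k, βh k = γ (n - k) / δ (n - k))
    (hγh : ∀ k, γh k = β (n - k) * δ (n - k))
    (hδh : ∀ k, δh k = δ (n - k))
    (hθh : ∀ k, θh k = (δ (n - k) / δ (n - k + 1)) * θ (n - k + 1)) :
    (∀ j k, j + 1 < k → k ≤ n - 1 →
      ahat j k = -βh j * (∏ i ∈ Finset.Ico (j + 1) k, (αh i - βh i * γh i)) * γh k) ∧
    (∀ k, 1 ≤ k → k ≤ n - 1 → ahat (k - 1) k = -(θh k + γh k * βh (k - 1))) :=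
  associated_semiseparable_general n α β γ δ θ hδ a ahat ha1 ha2 hahat αh βh γh θh hαh hβh hγh hθh
end

section
/- Let n ≥ 2 and α_m, β_m, γ_m, δ_m, θ_m ∈ ℂ with δ_m ≠ 0 and β_m ≠ 0 for all relevant indices m. Define the hat coefficients α̂_k = δ_{n-k}, β̂_k = δ_{n-k}·α_{n-k+2}·β_{n-k+1}/β_{n-k+2}, δ̂_k = −(δ_{n-k}/δ_{n-k+1})·(θ_{n-k+1} + α_{n-k+2}·β_{n-k+1}/β_{n-k+2}), γ̂_k = (δ_{n-k}/δ_{n-k+2})·(β_{n-k+1}/β_{n-k+2})·(θ_{n-k+2}·α_{n-k+2} − β_{n-k+2}·γ_{n-k+2}). Then for all indices 0 ≤ j < k−1 ≤ n−2 the following identity holds: (α̂_k/α̂_{j+2})·[((δ̂_{j+1}/α̂_{j+1}) + β̂_{j+1}/(α̂_j·α̂_{j+1}))·β̂_{j+2} + γ̂_{j+2}]·∏_{i=j+2}^{k-1} (β̂_{i+1}/α̂_{i+1}) = −(γ_{n-j}/δ_{n-j})·(∏_{i=j+2}^{k-1} α_{n-i+1})·β_{n-k+1}·δ_{n-k}; and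 for j = k−1: δ̂_k + β̂_k/α̂_{k-1} = −(δ_{n-k}/δ_{n-k+1})·θ_{n-k+1}. In other words, the generalized associated polynomials of a quasiseparable system with all β_k ≠ 0 satisfy well-free three-term recurrence relations with the hat coefficients. -/
/-!
The diagonal identity is an outright cancellation of the `α·β/β` terms. Divided by
`α̂_{j+1} = δ_{n-j-1}` it turns the first factor of the bracket into `-θ_{n-j}/δ_{n-j}`, after
which the `θ`-terms cancel against `γ̂_{j+2}` and only the `γ_{n-j}` term survives. Each ratio
`β̂_{i+1}/α̂_{i+1}` equals `α_{n-i+1}·β_{n-i}/β_{n-i+1}`, so their product telescopes in `β`.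
-/

open Finset

theorem Finset.prod_Ico_div_of_ne_zero {K : Type*} [Field K] {g : ℕ → K} (hg : ∀ i, g i ≠ 0)
    {a b : ℕ} (hab : a ≤ b) : ∏ i ∈ Ico a b, g (i + 1) / g i = g b / g a := by
  simpa using congrArg Units.val (prod_Ico_div (fun i => Units.mk0 (g i) (hg i)) hab)

namespace Quasiseparable

variable {K : Type*} [Field K] (n : ℕ) (α β γ δ θ : ℕ → K)

def hatα (k : ℕ) : K := δ (n - k)

def hatβ (k : ℕ) : K := δ (n - k) * α (n - k + 2) * β (n - k + 1) / β (n - k + 2)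

def hatδ (k : ℕ) : K :=
  -(δ (n - k) / δ (n - k + 1)) * (θ (n - k + 1) + α (n - k + 2) * β (n - k + 1) / β (n - k + 2))

def hatγ (k : ℕ) : K :=
  (δ (n - k) / δ (n - k + 2)) * (β (n - k + 1) / β (n - k + 2)) *
    (θ (n - k + 2) * α (n - k + 2) - β (n - k + 2) * γ (n - k + 2))

variable {n α β γ δ θ}

theorem hatδ_add_hatβ_div_hatα_sub_one {k : ℕ} (hk : 1 ≤ k) (hkn : k ≤ n) :
    hatδ n α β δ θ k + hatβ n α β δ k / hatα n δ (k - 1)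
      = -(δ (n - k) / δ (n - k + 1)) * θ (n - k + 1) := by
  rw [hatδ, hatβ, hatα, show n - (k - 1) = n - k + 1 by omega]
  ring

theorem hatβ_div_hatα (k : ℕ) (hδ : δ (n - k) ≠ 0) :
    hatβ n α β δ k / hatα n δ k = α (n - k + 2) * (β (n - k + 1) / β (n - k + 2)) := by
  rw [hatβ, hatα]
  field_simp

theorem wellfree_bracket {j : ℕ} (hjn : j + 2 ≤ n) (hδ : δ (n - (j + 1)) ≠ 0)
    (hβ : β (n - j) ≠ 0) :
    (hatδ n α β δ θ (j + 1) / hatα n δ (j + 1)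
        + hatβ n α β δ (j + 1) / (hatα n δ j * hatα n δ (j + 1))) * hatβ n α β δ (j + 2)
      + hatγ n α β γ δ θ (j + 2)
      = -(γ (n - j) / δ (n - j)) * (β (n - (j + 2) + 1) * δ (n - (j + 2))) := by
  have hdiag : hatδ n α β δ θ (j + 1) / hatα n δ (j + 1)
      + hatβ n α β δ (j + 1) / (hatα n δ j * hatα n δ (j + 1)) = -θ (n - j) / δ (n - j) := by
    have hsum := hatδ_add_hatβ_div_hatα_sub_one (n := n) (α := α) (β := β) (δ := δ) (θ := θ)
      (k := j + 1) (by omega) (by omega)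
    rw [Nat.add_sub_cancel, show n - (j + 1) + 1 = n - j by omega] at hsum
    rw [← div_div, ← add_div, hsum, hatα]
    field_simp
  rw [hdiag, hatβ, hatγ, show n - (j + 2) + 2 = n - j by omega]
  field_simp
  ring

theorem prod_hatβ_div_hatα (hδ : ∀ m, δ m ≠ 0) (hβ : ∀ m, β m ≠ 0) {a b : ℕ} (hab : a ≤ b)
    (hbn : b ≤ n) :
    ∏ i ∈ Ico a b, hatβ n α β δ (i + 1) / hatα n δ (i + 1)
      = (∏ i ∈ Ico a b, α (n - i + 1)) * (β (n - b + 1) / β (n - a + 1)) := by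
  have hfactor : ∀ i ∈ Ico a b, hatβ n α β δ (i + 1) / hatα n δ (i + 1)
      = α (n - i + 1) * (β (n - (i + 1) + 1) / β (n - i + 1)) := by
    intro i hi
    rw [hatβ_div_hatα _ (hδ _), show n - (i + 1) + 2 = n - i + 1 by grind]
  rw [prod_congr rfl hfactor, prod_mul_distrib,
    prod_Ico_div_of_ne_zero (g := fun i => β (n - i + 1)) (fun _ => hβ _) hab]

end Quasiseparable

open Quasiseparable in
theorem associated_wellfree_general (n : ℕ) (α β γ δ θ : ℕ → ℂ)
    (hδ : ∀ m, δ m ≠ 0) (hβ : ∀ m, β m ≠ 0)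
    (αh βh γh δh : ℕ → ℂ)
    (hαh : ∀ k, αh k = δ (n - k))
    (hβh : ∀ k, βh k = δ (n - k) * α (n - k + 2) * β (n - k + 1) / β (n - k + 2))
    (hδh : ∀ k, δh k = -(δ (n - k) / δ (n - k + 1)) *
        (θ (n - k + 1) + α (n - k + 2) * β (n - k + 1) / β (n - k + 2)))
    (hγh : ∀ k, γh k = (δ (n - k) / δ (n - k + 2)) * (β (n - k + 1) / β (n - k + 2)) *
        (θ (n - k + 2) * α (n - k + 2) - β (n - k + 2) * γ (n - k + 2))) :
    (∀ j k, j + 1 < k → k ≤ n - 1 →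
      (αh k / αh (j + 2)) *
          ((δh (j + 1) / αh (j + 1) + βh (j + 1) / (αh j * αh (j + 1))) * βh (j + 2)
            + γh (j + 2)) *
          (∏ i ∈ Finset.Ico (j + 2) k, (βh (i + 1) / αh (i + 1)))
        = -(γ (n - j) / δ (n - j)) * (∏ i ∈ Finset.Ico (j + 2) k, α (n - i + 1)) *
            (β (n - k + 1) * δ (n - k))) ∧
    (∀ k, 1 ≤ k → k ≤ n - 1 →
      δh k + βh k / αh (k - 1) = -(δ (n - k) / δ (n - k + 1)) * θ (n - k + 1)) := by
  obtain rfl : αh = hatα n δ := funext hαh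
  obtain rfl : βh = hatβ n α β δ := funext hβh
  obtain rfl : δh = hatδ n α β δ θ := funext hδh
  obtain rfl : γh = hatγ n α β γ δ θ := funext hγh
  refine ⟨fun j k hjk hkn => ?_, fun k hk hkn => hatδ_add_hatβ_div_hatα_sub_one hk (by omega)⟩
  rw [wellfree_bracket (by omega) (hδ _) (hβ _), prod_hatβ_div_hatα hδ hβ (by omega) (by omega),
    hatα, hatα]
  have hδj := hδ (n - (j + 2))
  have hβj := hβ (n - (j + 2) + 1)
  field_simp

/-- the generalized associated polynomials of a quasiseparable
system with all `β k ≠ 0` satisfy well-free three-term recurrence relations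
with the hat coefficients
`α̂ k = δ (n-k)`, `β̂ k = δ (n-k) α (n-k+2) β (n-k+1) / β (n-k+2)`,
`δ̂ k = -(δ (n-k)/δ (n-k+1)) (θ (n-k+1) + α (n-k+2) β (n-k+1)/β (n-k+2))`,
`γ̂ k = (δ (n-k)/δ (n-k+2)) (β (n-k+1)/β (n-k+2))
        (θ (n-k+2) α (n-k+2) - β (n-k+2) γ (n-k+2))`:
the well-free general-recurrence coefficients built from the hats coincide with
the hat coefficients `â j k` of the quasiseparable system. -/
theorem associated_wellfree (n : ℕ) (hn : 2 ≤ n) (α β γ δ θ : ℕ → ℂ)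
    (hδ : ∀ m, δ m ≠ 0) (hβ : ∀ m, β m ≠ 0)
    (αh βh γh δh : ℕ → ℂ)
    (hαh : ∀ k, αh k = δ (n - k))
    (hβh : ∀ k, βh k = δ (n - k) * α (n - k + 2) * β (n - k + 1) / β (n - k + 2))
    (hδh : ∀ k, δh k = -(δ (n - k) / δ (n - k + 1)) *
        (θ (n - k + 1) + α (n - k + 2) * β (n - k + 1) / β (n - k + 2)))
    (hγh : ∀ k, γh k = (δ (n - k) / δ (n - k + 2)) * (β (n - k + 1) / β (n - k + 2)) *
        (θ (n - k + 2) * α (n - k + 2) - β (n - k + 2) * γ (n - k + 2))) :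
    (∀ j k, j + 1 < k → k ≤ n - 1 →
      (αh k / αh (j + 2)) *
          ((δh (j + 1) / αh (j + 1) + βh (j + 1) / (αh j * αh (j + 1))) * βh (j + 2)
            + γh (j + 2)) *
          (∏ i ∈ Finset.Ico (j + 2) k, (βh (i + 1) / αh (i + 1)))
        = -(γ (n - j) / δ (n - j)) * (∏ i ∈ Finset.Ico (j + 2) k, α (n - i + 1)) *
            (β (n - k + 1) * δ (n - k))) ∧
    (∀ k, 1 ≤ k → k ≤ n - 1 →
      δh k + βh k / αh (k - 1) = -(δ (n - k) / δ (n - k + 1)) * θ (n - k + 1)) :=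
  associated_wellfree_general n α β γ δ θ hδ hβ αh βh γh δh hαh hβh hδh hγh
end

section
/- Let n ≥ 1, let d₂, …, dₙ ∈ ℂ, and define functions F₀, …, F_{n-1} : ℂ → ℂ by F_{n-1}(y) = 0 and F_k(y) = y·(F_{k+1}(y) + d_{k+2}) for k = n−2, …, 0. Let x₁, …, xₙ ∈ ℂ be nonzero, D_x = diag(x₁, …, xₙ), and let V_F(1/x) be the n×n matrix with (i,j) entry F_{j-1}(1/x_i). Then V_F(1/x)·Z₀ = D_x·V_F(1/x) − 𝟙·(d₂, d₃, …, dₙ, 0), where Z₀ is the n×n lower shift matrix and 𝟙·(d₂, …, dₙ, 0) denotes the rank-one matrix equal to the all-ones column vector times the row vector (d₂, d₃, …, dₙ, 0). -/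
open Matrix

/-! Solving the recurrence for `F (k + 1)` at `y = 1 / x` gives
`F (k + 1) (1 / x) = x * F k (1 / x) - d (k + 2)`, which is the identity entrywise, because right
multiplication by the lower shift moves column `j + 1` into column `j`; in the last column both
sides vanish since `F (n - 1) = 0`. -/

theorem Matrix.mul_lowerShift_apply {R : Type*} [NonAssocSemiring R] {n : ℕ}
    (A Z : Matrix (Fin n) (Fin n) R)
    (hZ : ∀ i j : Fin n, Z i j = if (i : ℕ) = (j : ℕ) + 1 then 1 else 0) (i j : Fin n) :
    (A * Z) i j = if h : (j : ℕ) + 1 < n then A i ⟨(j : ℕ) + 1, h⟩ else 0 := by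
  simp only [mul_apply, hZ, mul_ite, mul_one, mul_zero]
  split_ifs with h
  · rw [Fintype.sum_eq_single ⟨(j : ℕ) + 1, h⟩ fun k hk => if_neg fun hkj => hk (Fin.ext hkj),
      if_pos rfl]
  · exact Finset.sum_eq_zero fun k _ => if_neg (by omega)

theorem succ_apply_inv_eq_of_rec {K : Type*} [DivisionRing K] {d : ℕ → K} {F : ℕ → K → K}
    {k : ℕ} (hrec : ∀ y, F k y = y * (F (k + 1) y + d (k + 2))) {x : K} (hx : x ≠ 0) :
    F (k + 1) x⁻¹ = x * F k x⁻¹ - d (k + 2) := by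
  rw [hrec, mul_inv_cancel_left₀ hx, add_sub_cancel_right]

theorem VF_displacement_general (n : ℕ) (d : ℕ → ℂ) (F : ℕ → ℂ → ℂ)
    (hFtop : ∀ y, F (n - 1) y = 0)
    (hFrec : ∀ k, k + 2 ≤ n → ∀ y, F k y = y * (F (k + 1) y + d (k + 2)))
    (x : Fin n → ℂ) (hx : ∀ i, x i ≠ 0)
    (Z VF : Matrix (Fin n) (Fin n) ℂ)
    (hZ : ∀ i j : Fin n, Z i j = if (i : ℕ) = (j : ℕ) + 1 then 1 else 0)
    (hVF : ∀ i j : Fin n, VF i j = F (j : ℕ) (x i)⁻¹) :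
    VF * Z = Matrix.diagonal x * VF -
      Matrix.of (fun _ j : Fin n => if (j : ℕ) + 1 = n then 0 else d ((j : ℕ) + 2)) := by
  ext i j
  rw [mul_lowerShift_apply VF Z hZ, Matrix.sub_apply, diagonal_mul, of_apply, hVF]
  split_ifs with hlt hlast hlast
  · omega
  · rw [hVF, succ_apply_inv_eq_of_rec (hFrec j (by omega)) (hx i)]
  · rw [show (j : ℕ) = n - 1 by omega, hFtop, mul_zero, sub_zero]
  · omega

/-- displacement equation for the matrix `V_F(1/x)`,
where `F (n-1) = 0` and `F k y = y * (F (k+1) y + d (k+2))` for `k ≤ n-2`.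
With `VF i j = F j (1/x i)` (0-indexed columns), `Z` the lower shift, and
`D_x = diagonal x`, we have
`VF * Z = D_x * VF - 𝟙 ⬝ (d 2, d 3, …, d n, 0)`. -/
theorem VF_displacement (n : ℕ) (hn : 1 ≤ n) (d : ℕ → ℂ) (F : ℕ → ℂ → ℂ)
    (hFtop : ∀ y, F (n - 1) y = 0)
    (hFrec : ∀ k, k + 2 ≤ n → ∀ y, F k y = y * (F (k + 1) y + d (k + 2)))
    (x : Fin n → ℂ) (hx : ∀ i, x i ≠ 0)
    (Z VF : Matrix (Fin n) (Fin n) ℂ)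
    (hZ : ∀ i j : Fin n, Z i j = if (i : ℕ) = (j : ℕ) + 1 then 1 else 0)
    (hVF : ∀ i j : Fin n, VF i j = F (j : ℕ) (x i)⁻¹) :
    VF * Z = Matrix.diagonal x * VF -
      Matrix.of (fun _ j : Fin n => if (j : ℕ) + 1 = n then 0 else d ((j : ℕ) + 2)) :=
  VF_displacement_general n d F hFtop hFrec x hx Z VF hZ hVF
end

section
/- Let Q = {Q₀, …, Q_{n-1}} be a system of polynomials over ℂ satisfying general recurrence relations with coefficients τ_k and a_{j,k}, with all τ_k ≠ 0 (so that deg Q_k = k), and let M_Q, N_Q be the associated recurrence-relation matrices and W_Q = N_Q·M_Q⁻¹. Let x₁, …, xₙ ∈ ℂ be nonzero, V_Q(x) the polynomial Vandermonde matrix, D_{1/x} = diag(1/x₁, …, 1/xₙ), and S_{PQ} the basis transformation matrix with (i,j) entry equal to the coefficient of x^{i-1} in Q_{j-1}(x). Let d₁, …, dₙ ∈ ℂ be arbitrary, define F_{n-1}(y) = 0 and F_k(y) = y·(F_{k+1}(y) + d_{k+2}) for k = n−2, …, 0, and let V_F(1/x) be the n×n matrix with (i,j) entry F_{j-1}(1/x_i).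 Then V_Q(x)·(Σ_{k=1}^{n} d_k·W_Q^{k-1}) = (Σ_{k=1}^{n} d_k·D_{1/x}^{k-1})·V_Q(x) − V_F(1/x)·S_{PQ}. -/
/-!
Since `deg Q_j ≤ j`, the polynomial Vandermonde matrix factors as `V_Q(x) = V(x) S_PQ` through the
ordinary Vandermonde matrix `V(x)`. Read coefficientwise, the recurrence says
`S_PQ N_Q = Z S_PQ M_Q` for the upper shift matrix `Z`, i.e. `S_PQ W_Q = Z S_PQ`: in the monomial
basis `W_Q` is the shift. Hence `V_Q(x) W_Q^k = V(x) Z^k S_PQ`, and `V(x) Z^k` is `D_{1/x}^k V(x)`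
with its entries `x_i^(l-k)`, `l < k`, replaced by zero. Weighted by `d_(k+1)` and summed, the
missing entries of column `l` add up to `F_l(1/x_i)`.
-/

open Matrix Polynomial Finset

theorem SemiconjBy.mul_sum_smul_pow {R α : Type*} [CommSemiring R] [Semiring α] [Algebra R α]
    {a x y : α} (h : SemiconjBy a x y) (s : Finset ℕ) (c : ℕ → R) :
    a * ∑ k ∈ s, c k • x ^ k = (∑ k ∈ s, c k • y ^ k) * a := by
  simp only [mul_sum, sum_mul, mul_smul_comm, smul_mul_assoc, (h.pow_right _).eq]

theorem inv_pow_mul_pow_eq_ite {G₀ : Type*} [CommGroupWithZero G₀] {x : G₀} (hx : x ≠ 0)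
    (k l : ℕ) : x⁻¹ ^ k * x ^ l = if k ≤ l then x ^ (l - k) else x⁻¹ ^ (k - l) := by
  split_ifs with h
  · obtain ⟨m, rfl⟩ := Nat.exists_eq_add_of_le h
    rw [pow_add, ← mul_assoc, inv_pow, inv_mul_cancel₀ (pow_ne_zero _ hx), one_mul,
      Nat.add_sub_cancel_left]
  · obtain ⟨m, rfl⟩ := Nat.exists_eq_add_of_le (Nat.le_of_not_le h)
    rw [pow_add, mul_right_comm, inv_pow, inv_mul_cancel₀ (pow_ne_zero _ hx), one_mul,
      Nat.add_sub_cancel_left]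

section Horner

variable {R : Type*} [CommSemiring R] {n : ℕ} (d : ℕ → R)

def hornerTail (n : ℕ) (d : ℕ → R) (l : ℕ) (y : R) : R :=
  ∑ k ∈ Ico (l + 1) n, d (k + 1) * y ^ (k - l)

theorem hornerTail_eq_mul {l : ℕ} (hl : l + 1 < n) (y : R) :
    hornerTail n d l y = y * (hornerTail n d (l + 1) y + d (l + 2)) := by
  rw [hornerTail, sum_eq_sum_Ico_succ_bot hl, hornerTail, mul_add, mul_sum, add_comm]
  congr 1
  · refine sum_congr rfl fun k hk => ?_
    rw [mem_Ico] at hk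
    rw [show k - l = k - (l + 1) + 1 by omega, pow_succ]
    ring
  · simp [mul_comm]

theorem eq_hornerTail (F : ℕ → R → R) (hFtop : ∀ y, F (n - 1) y = 0)
    (hFrec : ∀ k, k + 2 ≤ n → ∀ y, F k y = y * (F (k + 1) y + d (k + 2)))
    {l : ℕ} (hl : l < n) (y : R) : F l y = hornerTail n d l y := by
  induction h : n - 1 - l generalizing l with
  | zero =>
    rw [show l = n - 1 by omega, hFtop, hornerTail, Ico_eq_empty (by omega), sum_empty]
  | succ t ih =>
    rw [hFrec l (by omega), ih (by omega) (by omega)]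
    exact (hornerTail_eq_mul d (by omega) y).symm

end Horner

section Shift

variable {R : Type*} [CommRing R] {n : ℕ}

def shiftMatrix (n : ℕ) : Matrix (Fin n) (Fin n) R :=
  of fun i j => if (j : ℕ) = i + 1 then 1 else 0

theorem shiftMatrix_pow_apply (k : ℕ) (i j : Fin n) :
    (shiftMatrix n ^ k : Matrix (Fin n) (Fin n) R) i j = if (j : ℕ) = i + k then 1 else 0 := by
  induction k generalizing j with
  | zero => simp [one_apply, Fin.ext_iff, eq_comm]
  | succ k ih =>
    rw [pow_succ, mul_apply]
    simp only [ih]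
    simp only [shiftMatrix, of_apply, ite_mul, one_mul, zero_mul]
    rw [Fin.sum_univ_eq_sum_range
      (fun m => if m = i + k then if (j : ℕ) = m + 1 then (1 : R) else 0 else 0), sum_ite_eq']
    simp only [mem_range]
    have := j.isLt
    split_ifs <;> first | rfl | omega

theorem vandermonde_mul_shiftMatrix_pow_apply (x : Fin n → R) (k : ℕ) (i l : Fin n) :
    (vandermonde x * shiftMatrix n ^ k : Matrix (Fin n) (Fin n) R) i l =
      if k ≤ l then x i ^ ((l : ℕ) - k) else 0 := by
  simp only [mul_apply, vandermonde_apply, shiftMatrix_pow_apply, mul_ite, mul_one, mul_zero]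
  rw [Fin.sum_univ_eq_sum_range (fun m => if (l : ℕ) = m + k then x i ^ m else 0)]
  split_ifs with hkl
  · rw [sum_eq_single_of_mem ((l : ℕ) - k) (mem_range.2 (by omega))
      fun m _ hm => if_neg (by omega), if_pos (by omega)]
  · exact sum_eq_zero fun m _ => if_neg (by omega)

end Shift

theorem vandermonde_mul_sum_shiftMatrix_pow {K : Type*} [Field K] {n : ℕ} (x : Fin n → K)
    (hx : ∀ i, x i ≠ 0) (d : ℕ → K) :
    vandermonde x * ∑ k ∈ range n, d (k + 1) • shiftMatrix n ^ k =
      (∑ k ∈ range n, d (k + 1) • diagonal (fun i => (x i)⁻¹) ^ k) * vandermonde x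
        - of fun i (l : Fin n) => hornerTail n d l (x i)⁻¹ := by
  ext i l
  have hleft : (vandermonde x * ∑ k ∈ range n, d (k + 1) • shiftMatrix n ^ k :
      Matrix (Fin n) (Fin n) K) i l =
      ∑ k ∈ range n, d (k + 1) * if k ≤ l then x i ^ ((l : ℕ) - k) else 0 := by
    simp only [mul_sum, Matrix.sum_apply, Matrix.mul_smul, Matrix.smul_apply,
      vandermonde_mul_shiftMatrix_pow_apply, smul_eq_mul]
  have hright :
      ((∑ k ∈ range n, d (k + 1) • diagonal (fun i => (x i)⁻¹) ^ k) * vandermonde x) i l =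
        ∑ k ∈ range n, d (k + 1) * ((x i)⁻¹ ^ k * x i ^ (l : ℕ)) := by
    simp only [sum_mul, Matrix.sum_apply, smul_mul, Matrix.smul_apply, diagonal_pow, diagonal_mul,
      Pi.pow_apply, vandermonde_apply, smul_eq_mul]
  have htail : hornerTail n d l (x i)⁻¹ =
      ∑ k ∈ range n, if l < k then d (k + 1) * (x i)⁻¹ ^ (k - l) else 0 := by
    rw [hornerTail, ← sum_filter]
    congr 1
    ext k
    simp only [mem_Ico, mem_filter, mem_range]
    omega
  rw [Matrix.sub_apply, hleft, hright, of_apply, htail, ← sum_sub_distrib]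
  refine sum_congr rfl fun k _ => ?_
  rw [inv_pow_mul_pow_eq_ite (hx i)]
  split_ifs <;> first | omega | ring

section Recurrence

variable {R : Type*} [CommRing R] {n : ℕ}

structure IsGeneralRecurrence (n : ℕ) (τ : ℕ → R) (a : ℕ → ℕ → R) (Q : ℕ → R[X]) : Prop where
  zero : Q 0 = C (τ 0)
  succ : ∀ k, 1 ≤ k → k ≤ n - 1 →
    Q k = C (τ k) * X * Q (k - 1) - ∑ j ∈ range k, C (a j k) * Q j

def recMatrixM (n : ℕ) (a : ℕ → ℕ → R) : Matrix (Fin n) (Fin n) R :=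
  of fun i j => if (i : ℕ) = j then 1 else if (i : ℕ) < j then a i j else 0

def recMatrixN (n : ℕ) (τ : ℕ → R) : Matrix (Fin n) (Fin n) R :=
  of fun i j => if (j : ℕ) = i + 1 then τ (i + 1) else 0

def coeffMatrix (n : ℕ) (Q : ℕ → R[X]) : Matrix (Fin n) (Fin n) R :=
  of fun i j => (Q j).coeff i

theorem det_recMatrixM (a : ℕ → ℕ → R) : (recMatrixM n a).det = 1 := by
  rw [det_of_isUpperTriangular]
  · exact prod_eq_one fun i _ => if_pos rfl
  · intro i j hij
    exact (if_neg (Fin.val_ne_of_ne hij.ne')).trans (if_neg (by simpa using hij.le.not_gt))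

theorem of_mul_recMatrixM_apply (f : Fin n → ℕ → R) (a : ℕ → ℕ → R) (i k : Fin n) :
    (of (fun i (j : Fin n) => f i j) * recMatrixM n a) i k =
      f i k + ∑ j ∈ range k, a j k * f i j := by
  simp only [mul_apply, of_apply, recMatrixM]
  rw [Fin.sum_univ_eq_sum_range
    (fun j => f i j * if j = k then 1 else if j < k then a j k else 0) n]
  have hsplit : ∀ j, (f i j * if j = k then 1 else if j < k then a j k else 0) =
      (if j = k then f i k else 0) + if j < k then a j k * f i j else 0 := by
    intro j
    split_ifs <;> first | omega | simp_all [mul_comm]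
  have hlt : (range n).filter (· < (k : ℕ)) = range k := by
    ext j
    simp only [mem_filter, mem_range]
    omega
  rw [sum_congr rfl fun j _ => hsplit j, sum_add_distrib, sum_ite_eq',
    if_pos (mem_range.2 k.isLt), ← sum_filter, hlt]

theorem of_mul_recMatrixN_apply (f : Fin n → ℕ → R) (τ : ℕ → R) (i k : Fin n) :
    (of (fun i (j : Fin n) => f i j) * recMatrixN n τ) i k =
      if (k : ℕ) = 0 then 0 else τ k * f i (k - 1) := by
  simp only [mul_apply, of_apply, recMatrixN]
  rw [Fin.sum_univ_eq_sum_range (fun j => f i j * if (k : ℕ) = j + 1 then τ (j + 1) else 0) n]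
  split_ifs with hk
  · exact sum_eq_zero fun j _ => by rw [if_neg (by omega), mul_zero]
  · rw [sum_eq_single_of_mem ((k : ℕ) - 1) (mem_range.2 (by omega))
      fun j _ hj => by rw [if_neg (by omega), mul_zero], if_pos (by omega),
      Nat.sub_add_cancel (by omega), mul_comm]

theorem vandermonde_mul_coeffMatrix {Q : ℕ → R[X]} (hQ : ∀ j : Fin n, (Q j).natDegree < n)
    (x : Fin n → R) :
    vandermonde x * coeffMatrix n Q = of fun i (j : Fin n) => (Q j).eval (x i) := by
  ext i j
  rw [mul_apply, of_apply, eval_eq_sum_range' (hQ j), ← Fin.sum_univ_eq_sum_range]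
  exact sum_congr rfl fun l _ => mul_comm _ _

namespace IsGeneralRecurrence

variable {τ : ℕ → R} {a : ℕ → ℕ → R} {Q : ℕ → R[X]} (hQ : IsGeneralRecurrence n τ a Q)
include hQ

theorem natDegree_le {k : ℕ} (hk : k < n) : (Q k).natDegree ≤ k := by
  induction k using Nat.strong_induction_on with
  | _ k ih =>
    rcases k with _ | k
    · simp [hQ.zero]
    rw [hQ.succ (k + 1) (by omega) (by omega), Nat.add_sub_cancel]
    refine (natDegree_sub_le_of_le ?_ (natDegree_sum_le_of_forall_le _ _ fun j hj => ?_)).trans_eq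
      (max_self (k + 1))
    · rw [mul_assoc]
      refine (natDegree_C_mul_le _ _).trans (natDegree_mul_le.trans ?_)
      have := ih k (by omega) (by omega)
      have := natDegree_X_le (R := R)
      omega
    · have hjk : j < k + 1 := mem_range.1 hj
      have := ih j hjk (by omega)
      exact (natDegree_C_mul_le _ _).trans (by omega)

theorem coeff_succ_add_sum {k : ℕ} (hk1 : 1 ≤ k) (hk : k ≤ n - 1) (l : ℕ) :
    (Q k).coeff (l + 1) + ∑ j ∈ range k, a j k * (Q j).coeff (l + 1) =
      τ k * (Q (k - 1)).coeff l := by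
  rw [hQ.succ k hk1 hk, coeff_sub, finsetSum_coeff, mul_assoc, coeff_C_mul, coeff_X_mul]
  simp only [coeff_C_mul, sub_add_cancel]

theorem shiftMatrix_mul_coeffMatrix :
    shiftMatrix n * coeffMatrix n Q = of fun i j : Fin n => (Q j).coeff ((i : ℕ) + 1) := by
  ext i j
  simp only [mul_apply, shiftMatrix, coeffMatrix, of_apply, ite_mul, one_mul, zero_mul]
  rw [Fin.sum_univ_eq_sum_range (fun m => if m = i + 1 then (Q j).coeff m else 0) n,
    sum_ite_eq']
  split_ifs with hi
  · rfl
  · rw [mem_range] at hi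
    have := hQ.natDegree_le j.isLt
    exact (coeff_eq_zero_of_natDegree_lt (by omega)).symm

theorem coeffMatrix_mul_recMatrixN :
    coeffMatrix n Q * recMatrixN n τ = shiftMatrix n * coeffMatrix n Q * recMatrixM n a := by
  rw [hQ.shiftMatrix_mul_coeffMatrix]
  ext l k
  rw [coeffMatrix, of_mul_recMatrixN_apply (fun i j => (Q j).coeff i),
    of_mul_recMatrixM_apply (fun i j => (Q j).coeff (i + 1))]
  split_ifs with hk
  · simp [hk, hQ.zero]
  · exact (hQ.coeff_succ_add_sum (by omega) (by omega) l).symm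

theorem semiconjBy_coeffMatrix :
    SemiconjBy (coeffMatrix n Q) (recMatrixN n τ * (recMatrixM n a)⁻¹) (shiftMatrix n) := by
  have hM : IsUnit (recMatrixM n a).det := by rw [det_recMatrixM]; exact isUnit_one
  rw [SemiconjBy, ← Matrix.mul_assoc, hQ.coeffMatrix_mul_recMatrixN, Matrix.mul_assoc,
    mul_nonsing_inv _ hM, Matrix.mul_one]

end IsGeneralRecurrence

end Recurrence

theorem sums_in_inversion_formula_general (n : ℕ)
    (τ : ℕ → ℂ) (a : ℕ → ℕ → ℂ) (Q : ℕ → Polynomial ℂ)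
    (hQ0 : Q 0 = C (τ 0))
    (hQrec : ∀ k, 1 ≤ k → k ≤ n - 1 →
      Q k = C (τ k) * X * Q (k - 1) - ∑ j ∈ Finset.range k, C (a j k) * Q j)
    (x : Fin n → ℂ) (hx : ∀ i, x i ≠ 0)
    (M N V SPQ : Matrix (Fin n) (Fin n) ℂ)
    (hM : ∀ i j : Fin n,
      M i j = if (i : ℕ) = (j : ℕ) then 1
              else if (i : ℕ) < (j : ℕ) then a (i : ℕ) (j : ℕ) else 0)
    (hN : ∀ i j : Fin n,
      N i j = if (j : ℕ) = (i : ℕ) + 1 then τ ((i : ℕ) + 1) else 0)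
    (hV : ∀ i j : Fin n, V i j = (Q (j : ℕ)).eval (x i))
    (hSPQ : ∀ i j : Fin n, SPQ i j = (Q (j : ℕ)).coeff (i : ℕ))
    (d : ℕ → ℂ) (F : ℕ → ℂ → ℂ)
    (hFtop : ∀ y, F (n - 1) y = 0)
    (hFrec : ∀ k, k + 2 ≤ n → ∀ y, F k y = y * (F (k + 1) y + d (k + 2)))
    (VF : Matrix (Fin n) (Fin n) ℂ)
    (hVF : ∀ i j : Fin n, VF i j = F (j : ℕ) (x i)⁻¹) :
    V * (∑ k ∈ Finset.range n, d (k + 1) • (N * M⁻¹) ^ k) =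
      (∑ k ∈ Finset.range n, d (k + 1) • (Matrix.diagonal fun i => (x i)⁻¹) ^ k) * V
        - VF * SPQ := by
  have hQ : IsGeneralRecurrence n τ a Q := ⟨hQ0, hQrec⟩
  obtain rfl : M = recMatrixM n a := Matrix.ext hM
  obtain rfl : N = recMatrixN n τ := Matrix.ext hN
  obtain rfl : SPQ = coeffMatrix n Q := Matrix.ext hSPQ
  obtain rfl : V = vandermonde x * coeffMatrix n Q := by
    rw [vandermonde_mul_coeffMatrix fun j => (hQ.natDegree_le j.isLt).trans_lt j.isLt]
    exact Matrix.ext hV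
  obtain rfl : VF = of fun i (l : Fin n) => hornerTail n d l (x i)⁻¹ :=
    Matrix.ext fun i l => (hVF i l).trans (eq_hornerTail d F hFtop hFrec l.isLt _)
  rw [Matrix.mul_assoc, hQ.semiconjBy_coeffMatrix.mul_sum_smul_pow, ← Matrix.mul_assoc,
    vandermonde_mul_sum_shiftMatrix_pow x hx d, Matrix.sub_mul, Matrix.mul_assoc]

/-- computation of the sums in the inversion formula.
For a polynomial system `Q` satisfying the general recurrence relations (with
all `τ k ≠ 0`), recurrence matrices `M`, `N`, `W_Q = N * M⁻¹`, nonzero nodes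
`x i`, Vandermonde matrix `V`, basis transformation matrix `SPQ`, arbitrary
`d 1, …, d n`, Horner-type functions `F` and the matrix `VF`, we have
`V * (∑_{k=1}^n d k • W_Q^(k-1))
  = (∑_{k=1}^n d k • D_{1/x}^(k-1)) * V - VF * SPQ`. -/
theorem sums_in_inversion_formula (n : ℕ) (hn : 1 ≤ n)
    (τ : ℕ → ℂ) (a : ℕ → ℕ → ℂ) (Q : ℕ → Polynomial ℂ)
    (hτ : ∀ k, τ k ≠ 0)
    (hQ0 : Q 0 = C (τ 0))
    (hQrec : ∀ k, 1 ≤ k → k ≤ n - 1 →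
      Q k = C (τ k) * X * Q (k - 1) - ∑ j ∈ Finset.range k, C (a j k) * Q j)
    (x : Fin n → ℂ) (hx : ∀ i, x i ≠ 0)
    (M N V SPQ : Matrix (Fin n) (Fin n) ℂ)
    (hM : ∀ i j : Fin n,
      M i j = if (i : ℕ) = (j : ℕ) then 1
              else if (i : ℕ) < (j : ℕ) then a (i : ℕ) (j : ℕ) else 0)
    (hN : ∀ i j : Fin n,
      N i j = if (j : ℕ) = (i : ℕ) + 1 then τ ((i : ℕ) + 1) else 0)
    (hV : ∀ i j : Fin n, V i j = (Q (j : ℕ)).eval (x i))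
    (hSPQ : ∀ i j : Fin n, SPQ i j = (Q (j : ℕ)).coeff (i : ℕ))
    (d : ℕ → ℂ) (F : ℕ → ℂ → ℂ)
    (hFtop : ∀ y, F (n - 1) y = 0)
    (hFrec : ∀ k, k + 2 ≤ n → ∀ y, F k y = y * (F (k + 1) y + d (k + 2)))
    (VF : Matrix (Fin n) (Fin n) ℂ)
    (hVF : ∀ i j : Fin n, VF i j = F (j : ℕ) (x i)⁻¹) :
    V * (∑ k ∈ Finset.range n, d (k + 1) • (N * M⁻¹) ^ k) =
      (∑ k ∈ Finset.range n, d (k + 1) • (Matrix.diagonal fun i => (x i)⁻¹) ^ k) * V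
        - VF * SPQ :=
  sums_in_inversion_formula_general n τ a Q hQ0 hQrec x hx M N V SPQ hM hN hV hSPQ d F hFtop hFrec
    VF hVF
end
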